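/- arXiv:2511.21306 — 3 statements merged into one kernel-verified Lean document; each statement's English description precedes it below -/
import Mathlib

section
/- Let G be a group, K a subgroup of G, and X a symmetric relative generating set of G with respect to K such that the Cayley graph Γ(G, K⊔X) is δ-hyperbolic for some δ ≥ 0. Let φ be an antisymmetric quasimorphism on K. If φ is (G,X)-controlled, then φ extends to an antisymmetric quasimorphism Φ on G (i.e. Φ restricted to K equals φ). Moreover, there is a constant M depending only on δ such that if φ is linearly (G,X)-controlled with constant C₀ > 0, then the extension Φ can be chosen with D(Φ) ≤ M·C₀ + M·D(φ). -/
open Monoid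
open scoped Monoid.Coprod

namespace QMExt

section QM

variable {H : Type*} [Group H]

/-- A quasimorphism: a real-valued function with finite defect. -/
def IsQM (φ : H → ℝ) : Prop := ∃ D : ℝ, ∀ g h : H, |φ g + φ h - φ (g * h)| ≤ D

/-- The defect `D(φ)` of a quasimorphism. -/
noncomputable def qmDefect (φ : H → ℝ) : ℝ :=
  sSup {r : ℝ | ∃ g h : H, r = |φ g + φ h - φ (g * h)|}

/-- An antisymmetric function: `φ(g⁻¹) = -φ(g)`. -/
def IsAntisym (φ : H → ℝ) : Prop := ∀ g : H, φ g⁻¹ = - φ g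

end QM

section WordMetric

variable {Q : Type*} [Group Q]

/-- Word length of `q` with respect to the alphabet `S`. -/
noncomputable def wordLenOn (S : Set Q) (q : Q) : ℕ :=
  sInf {n | ∃ l : List Q, (∀ y ∈ l, y ∈ S) ∧ l.prod = q ∧ l.length = n}

/-- Distance in the Cayley graph of `Q` with respect to the generating set `S`. -/
noncomputable def wordDist (S : Set Q) (g h : Q) : ℝ := (wordLenOn S (g⁻¹ * h) : ℝ)

/-- Gromov product of `x` and `y` at `w` in the Cayley graph. -/
noncomputable def gprod (S : Set Q) (x y w : Q) : ℝ :=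
  (wordDist S w x + wordDist S w y - wordDist S x y) / 2

/-- The Cayley graph of `Q` w.r.t. `S` is Gromov δ-hyperbolic (four-point condition). -/
def HypWith (S : Set Q) (δ : ℝ) : Prop :=
  ∀ w x y z : Q, min (gprod S x y w) (gprod S y z w) - δ ≤ gprod S x z w

end WordMetric

/-- A group is hyperbolic if it has a finite symmetric generating set whose
Cayley graph is Gromov hyperbolic. -/
def IsHyperbolicGroup (Q : Type*) [Group Q] : Prop :=
  ∃ S : Set Q, S.Finite ∧ (∀ s ∈ S, s⁻¹ ∈ S) ∧ Subgroup.closure S = ⊤ ∧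
    ∃ δ : ℝ, 0 ≤ δ ∧ HypWith S δ

section Rel

variable {Q : Type*} [Group Q]

/-- `φ : P → ℝ` is `Q`-quasi-invariant. -/
def IsGQuasiInvariant (P : Subgroup Q) (φ : ↥P → ℝ) : Prop :=
  ∃ D : ℝ, ∀ k₁ k₂ : ↥P, IsConj (k₁ : Q) (k₂ : Q) → |φ k₁ - φ k₂| ≤ D

/-- `D^Q(φ)`, the quasi-invariance defect of `φ : P → ℝ`. -/
noncomputable def invDefect (P : Subgroup Q) (φ : ↥P → ℝ) : ℝ :=
  sSup {r : ℝ | ∃ k₁ k₂ : ↥P, IsConj (k₁ : Q) (k₂ : Q) ∧ r = |φ k₁ - φ k₂|}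

/-- A letter of the alphabet `P ⊔ Y`: either a `P`-letter, or a generator `y ∈ Y`
or its formal inverse (marked by the boolean). -/
abbrev RelLetter (P : Subgroup Q) (Y : Set Q) : Type _ := ↥P ⊕ ↥Y × Bool

/-- Evaluation of a letter in the free product `P ∗ F(Y)`. -/
noncomputable def evalLetter (P : Subgroup Q) (Y : Set Q) :
    RelLetter P Y → (↥P ∗ FreeGroup ↥Y)
  | Sum.inl k => Coprod.inl k
  | Sum.inr (x, true) => Coprod.inr (FreeGroup.of x)
  | Sum.inr (x, false) => (Coprod.inr (FreeGroup.of x))⁻¹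

/-- Evaluation of a word on the alphabet `P ⊔ Y` in the free product `P ∗ F(Y)`. -/
noncomputable def evalWord (P : Subgroup Q) (Y : Set Q) (l : List (RelLetter P Y)) :
    ↥P ∗ FreeGroup ↥Y :=
  (l.map (evalLetter P Y)).prod

/-- The projection `η : P ∗ F(Y) → P` killing all `Y`-letters. -/
noncomputable def eta (P : Subgroup Q) (Y : Set Q) : (↥P ∗ FreeGroup ↥Y) →* ↥P :=
  Coprod.lift (MonoidHom.id ↥P) 1

/-- The evaluation map `θ : P ∗ F(Y) → Q`. -/
noncomputable def theta (P : Subgroup Q) (Y : Set Q) : (↥P ∗ FreeGroup ↥Y) →* Q :=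
  Coprod.lift P.subtype (FreeGroup.lift fun y : ↥Y => (y : Q))

/-- Word length `|a|` of `a ∈ P ∗ F(Y)` over the alphabet `P ⊔ Y`. -/
noncomputable def wordLen (P : Subgroup Q) (Y : Set Q) (a : ↥P ∗ FreeGroup ↥Y) : ℕ :=
  sInf {n | ∃ l : List (RelLetter P Y), evalWord P Y l = a ∧ l.length = n}

/-- `|a|_Y`: the number of `Y`-letters in the normal form of `a`, i.e. the least
number of `Y`-letters in a word over `P ⊔ Y` representing `a`. -/
noncomputable def xLen (P : Subgroup Q) (Y : Set Q) (a : ↥P ∗ FreeGroup ↥Y) : ℕ :=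
  sInf {m | ∃ l : List (RelLetter P Y), evalWord P Y l = a ∧ l.countP Sum.isRight = m}

/-- `φ` is `(Q,Y)`-controlled by `f`. -/
def ControlledBy (P : Subgroup Q) (Y : Set Q) (φ : ↥P → ℝ) (f : ℕ → ℝ) : Prop :=
  ∀ n : ℕ, ∀ a : ↥P ∗ FreeGroup ↥Y, a ∈ (theta P Y).ker → wordLen P Y a ≤ n →
    |φ (eta P Y a)| ≤ f n

/-- `φ` is `(Q,Y)`-controlled. -/
def Controlled (P : Subgroup Q) (Y : Set Q) (φ : ↥P → ℝ) : Prop :=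
  ∃ f : ℕ → ℝ, ControlledBy P Y φ f

/-- `φ` is linearly `(Q,Y)`-controlled with constant `C₀`. -/
def LinearlyControlled (P : Subgroup Q) (Y : Set Q) (φ : ↥P → ℝ) (C₀ : ℝ) : Prop :=
  ControlledBy P Y φ (fun n => C₀ * n + C₀)

/-- `R` is the set of relators of a relative presentation `Q = ⟨P, Y ∣ R_P, R⟩`:
`Y` is a relative generating set and `ker θ` is the normal closure of `R`. -/
def IsRelPresentation (P : Subgroup Q) (Y : Set Q) (R : Set (↥P ∗ FreeGroup ↥Y)) : Prop :=
  Function.Surjective (theta P Y) ∧ Subgroup.normalClosure R = (theta P Y).ker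

/-- `f` is a relative isoperimetric function of the relative presentation with relators `R`. -/
def RelIsoperimetricFn (P : Subgroup Q) (Y : Set Q) (R : Set (↥P ∗ FreeGroup ↥Y))
    (f : ℕ → ℝ) : Prop :=
  ∀ n : ℕ, ∀ a ∈ (theta P Y).ker, wordLen P Y a ≤ n →
    ∃ l : List ((↥P ∗ FreeGroup ↥Y) × (↥P ∗ FreeGroup ↥Y)),
      (∀ p ∈ l, p.2 ∈ R) ∧ (l.map fun p => p.1 * p.2 * p.1⁻¹).prod = a ∧ (l.length : ℝ) ≤ f n

/-- Admissible adjacent pairs in a reduced word: no two adjacent `P`-letters, and no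
adjacent pair `y y⁻¹` or `y⁻¹ y` of `Y`-letters. -/
def okPair (P : Subgroup Q) (Y : Set Q) : RelLetter P Y → RelLetter P Y → Prop
  | Sum.inl _, Sum.inl _ => False
  | Sum.inr (x, s), Sum.inr (y, t) => x = y → t ≠ !s
  | _, _ => True

/-- A reduced word on `P ⊔ Y` (the normal form of the element it represents). -/
def IsReducedWord (P : Subgroup Q) (Y : Set Q) (l : List (RelLetter P Y)) : Prop :=
  (∀ k : ↥P, Sum.inl k ∈ l → k ≠ 1) ∧ l.Chain' (okPair P Y)

/-- The relative presentation with relators `R` is bounded. -/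
def BoundedRel (P : Subgroup Q) (Y : Set Q) (R : Set (↥P ∗ FreeGroup ↥Y)) : Prop :=
  ∃ B : ℕ, ∀ r ∈ R, wordLen P Y r ≤ B

/-- The relative presentation with relators `R` is strongly bounded: the relators have
uniformly bounded length and only finitely many `P`-letters occur in them. -/
def StronglyBoundedRel (P : Subgroup Q) (Y : Set Q) (R : Set (↥P ∗ FreeGroup ↥Y)) : Prop :=
  ∃ B : ℕ, ∃ F : Set ↥P, F.Finite ∧
    ∀ r ∈ R, ∃ l : List (RelLetter P Y), IsReducedWord P Y l ∧ evalWord P Y l = r ∧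
      l.length ≤ B ∧ ∀ k : ↥P, Sum.inl k ∈ l → k ∈ F

/-- `P` is hyperbolically embedded in `Q`: there are a symmetric relative generating set and
a strongly bounded relative presentation with a linear relative isoperimetric function. -/
def IsHypEmbedded (P : Subgroup Q) : Prop :=
  ∃ Y : Set Q, (∀ y ∈ Y, y⁻¹ ∈ Y) ∧ ∃ R : Set (↥P ∗ FreeGroup ↥Y),
    IsRelPresentation P Y R ∧ StronglyBoundedRel P Y R ∧
    ∃ A B : ℝ, RelIsoperimetricFn P Y R (fun n => A * n + B)

/-- `Q` is hyperbolic relative to `P` (Osin): there is a finite relative presentation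
with a linear relative isoperimetric function. -/
def IsRelHyperbolic (P : Subgroup Q) : Prop :=
  ∃ Y : Set Q, (∀ y ∈ Y, y⁻¹ ∈ Y) ∧ ∃ R : Set (↥P ∗ FreeGroup ↥Y), R.Finite ∧
    IsRelPresentation P Y R ∧ ∃ A B : ℝ, RelIsoperimetricFn P Y R (fun n => A * n + B)

/-- `L` is a (left) transversal of `P` in `Q`: a set of coset representatives. -/
def IsTransversal (P : Subgroup Q) (L : Set Q) : Prop :=
  ∀ q : Q, ∃! l : Q, l ∈ L ∧ l⁻¹ * q ∈ P

/-- `φ̃_C(a) := φ̃(a) + C·|a|_Y`. -/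
noncomputable def phitC (P : Subgroup Q) (Y : Set Q) (φ : ↥P → ℝ) (C : ℝ)
    (a : ↥P ∗ FreeGroup ↥Y) : ℝ :=
  φ (eta P Y a) + C * (xLen P Y a : ℝ)

/-- `Φ_C(g) := inf { φ̃_C(a) ∣ θ(a) = g }`. -/
noncomputable def PhiC (P : Subgroup Q) (Y : Set Q) (φ : ↥P → ℝ) (C : ℝ) (g : Q) : ℝ :=
  sInf {r : ℝ | ∃ a : ↥P ∗ FreeGroup ↥Y, theta P Y a = g ∧ r = phitC P Y φ C a}

end Rel

section Quot

/-- Word length of an element of a free group. -/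
noncomputable def freeLen {A : Type*} (w : FreeGroup A) : ℕ :=
  sInf {n | ∃ l : List (A × Bool), FreeGroup.mk l = w ∧ l.length = n}

/-- `f` is an isoperimetric function of the presentation of `Q` with generators `A`
(mapped to `Q` by `pr`) and relators `Rb`. -/
def IsoFn {Q : Type*} [Group Q] {A : Type*} (pr : FreeGroup A →* Q)
    (Rb : Set (FreeGroup A)) (f : ℕ → ℝ) : Prop :=
  ∀ n : ℕ, ∀ w ∈ pr.ker, freeLen w ≤ n →
    ∃ l : List (FreeGroup A × FreeGroup A), (∀ p ∈ l, p.2 ∈ Rb) ∧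
      (l.map fun p => p.1 * p.2 * p.1⁻¹).prod = w ∧ (l.length : ℝ) ≤ f n

variable {G : Type*} [Group G]

/-- The set of relators `R = { s(r̄)·k_r⁻¹ }` obtained by lifting the relators `R̄` of a
presentation of `G/K` along the lift `σ` of the generators. -/
def Rlift (K : Subgroup G) {Xbar : Set (G ⧸ K)} (Rbar : Set (FreeGroup ↥Xbar))
    (σ : ↥Xbar → G) : Set (↥K ∗ FreeGroup ↥(Set.range σ)) :=
  {a | ∃ r ∈ Rbar, ∃ k : ↥K,
    theta K (Set.range σ) (Coprod.inr (FreeGroup.map (Set.rangeFactorization σ) r)) = ↑k ∧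
    a = Coprod.inr (FreeGroup.map (Set.rangeFactorization σ) r) * (Coprod.inl k)⁻¹}

/-- The set of relators `T' = { w k w⁻¹ k_w⁻¹ ∣ w ∈ X*, k ∈ K }`. -/
def Tset (K : Subgroup G) (X : Set G) : Set (↥K ∗ FreeGroup ↥X) :=
  {a | ∃ lw : List ↥X, ∃ k k' : ↥K,
    theta K X (Coprod.inr (lw.map FreeGroup.of).prod * Coprod.inl k *
      (Coprod.inr (lw.map FreeGroup.of).prod)⁻¹) = ↑k' ∧
    a = Coprod.inr (lw.map FreeGroup.of).prod * Coprod.inl k *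
      (Coprod.inr (lw.map FreeGroup.of).prod)⁻¹ * (Coprod.inl k')⁻¹}

/-- The set of `(G,K)`-commutators `[g,k]` with `g ∈ G`, `k ∈ K`. -/
def commSet (G : Type*) [Group G] (K : Subgroup G) : Set G :=
  {c | ∃ g : G, ∃ k ∈ K, c = g * k * g⁻¹ * k⁻¹}

/-- Stable word length (e.g. stable (mixed) commutator length) with respect to the
generating set `S`, as the infimum of `|gⁿ|/n`. -/
noncomputable def sclOn {G : Type*} [Group G] (S : Set G) (g : G) : ℝ :=
  ⨅ n : ℕ+, (wordLenOn S (g ^ (n : ℕ)) : ℝ) / ((n : ℕ) : ℝ)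

end Quot

end QMExt

namespace QMExt
section A
variable {G : Type*} [Group G] (K : Subgroup G) (X : Set G)

theorem evalWord_nil : evalWord K X [] = 1 := rfl

theorem evalWord_append (l₁ l₂ : List (RelLetter K X)) :
    evalWord K X (l₁ ++ l₂) = evalWord K X l₁ * evalWord K X l₂ := by
  simp [evalWord, List.map_append, List.prod_append]

theorem evalWord_cons (c : RelLetter K X) (l : List (RelLetter K X)) :
    evalWord K X (c :: l) = evalLetter K X c * evalWord K X l := by
  simp [evalWord, List.map_cons, List.prod_cons]

/-- formal inverse of a letter -/
def invLetter : RelLetter K X → RelLetter K X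
  | Sum.inl k => Sum.inl k⁻¹
  | Sum.inr (x, b) => Sum.inr (x, !b)

theorem evalLetter_invLetter (c : RelLetter K X) :
    evalLetter K X (invLetter K X c) = (evalLetter K X c)⁻¹ := by
  rcases c with k | ⟨x, b⟩
  · simp [invLetter, evalLetter, map_inv]
  · cases b <;> simp [invLetter, evalLetter]

def invWord (l : List (RelLetter K X)) : List (RelLetter K X) :=
  (l.map (invLetter K X)).reverse

theorem invWord_length (l : List (RelLetter K X)) : (invWord K X l).length = l.length := by
  simp [invWord]

theorem evalWord_invWord (l : List (RelLetter K X)) :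
    evalWord K X (invWord K X l) = (evalWord K X l)⁻¹ := by
  induction l with
  | nil => simp [invWord, evalWord_nil]
  | cons c l ih =>
      have h : invWord K X (c :: l) = invWord K X l ++ [invLetter K X c] := by
        simp [invWord]
      rw [h, evalWord_append, ih, evalWord_cons, evalWord_cons, evalWord_nil,
        evalLetter_invLetter]
      simp [mul_assoc]

theorem exists_word (a : ↥K ∗ FreeGroup ↥X) : ∃ l : List (RelLetter K X), evalWord K X l = a := by
  induction a using Coprod.induction_on with
  | inl k => exact ⟨[Sum.inl k], by simp [evalWord_cons, evalWord_nil, evalLetter]⟩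
  | inr w =>
      induction w using FreeGroup.induction_on with
      | C1 => exact ⟨[], by simp [evalWord_nil]⟩
      | of x =>
          refine ⟨[Sum.inr (x, true)], ?_⟩
          show evalLetter K X (Sum.inr (x, true)) * 1 = _
          rw [mul_one]; rfl
      | inv_of x _ =>
          refine ⟨[Sum.inr (x, false)], ?_⟩
          show evalLetter K X (Sum.inr (x, false)) * 1 = _
          rw [mul_one]; rfl
      | mul x y hx hy =>
          obtain ⟨l₁, h₁⟩ := hx
          obtain ⟨l₂, h₂⟩ := hy
          exact ⟨l₁ ++ l₂, by rw [evalWord_append, h₁, h₂, map_mul]⟩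
  | mul x y hx hy =>
      obtain ⟨l₁, h₁⟩ := hx
      obtain ⟨l₂, h₂⟩ := hy
      exact ⟨l₁ ++ l₂, by rw [evalWord_append, h₁, h₂]⟩

/-- wordLen basics -/
theorem wordLen_le (a : ↥K ∗ FreeGroup ↥X) (l : List (RelLetter K X)) (h : evalWord K X l = a) :
    wordLen K X a ≤ l.length :=
  Nat.sInf_le ⟨l, h, rfl⟩

theorem exists_min_word (a : ↥K ∗ FreeGroup ↥X) :
    ∃ l : List (RelLetter K X), evalWord K X l = a ∧ l.length = wordLen K X a := by
  have hne : {n | ∃ l : List (RelLetter K X), evalWord K X l = a ∧ l.length = n}.Nonempty := by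
    obtain ⟨l, hl⟩ := exists_word K X a
    exact ⟨l.length, l, hl, rfl⟩
  have := Nat.sInf_mem hne
  obtain ⟨l, hl, hlen⟩ := this
  exact ⟨l, hl, hlen⟩

theorem wordLen_one : wordLen K X (1 : ↥K ∗ FreeGroup ↥X) = 0 :=
  Nat.le_zero.mp (wordLen_le K X 1 [] rfl)

theorem wordLen_mul_le (a b : ↥K ∗ FreeGroup ↥X) :
    wordLen K X (a * b) ≤ wordLen K X a + wordLen K X b := by
  obtain ⟨la, ha, hla⟩ := exists_min_word K X a
  obtain ⟨lb, hb, hlb⟩ := exists_min_word K X b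
  have := wordLen_le K X (a * b) (la ++ lb) (by rw [evalWord_append, ha, hb])
  simpa [hla, hlb] using this

theorem wordLen_inv_le (a : ↥K ∗ FreeGroup ↥X) : wordLen K X a⁻¹ ≤ wordLen K X a := by
  obtain ⟨la, ha, hla⟩ := exists_min_word K X a
  have := wordLen_le K X a⁻¹ (invWord K X la) (by rw [evalWord_invWord, ha])
  simpa [invWord_length, hla] using this

theorem wordLen_inv (a : ↥K ∗ FreeGroup ↥X) : wordLen K X a⁻¹ = wordLen K X a :=
  le_antisymm (wordLen_inv_le K X a) (by simpa using wordLen_inv_le K X a⁻¹)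

theorem wordLen_inl_le (k : ↥K) : wordLen K X (Coprod.inl k) ≤ 1 :=
  wordLen_le K X _ [Sum.inl k] (by simp [evalWord_cons, evalWord_nil, evalLetter])

theorem wordLen_eq_zero (a : ↥K ∗ FreeGroup ↥X) (h : wordLen K X a = 0) : a = 1 := by
  obtain ⟨l, hl, hlen⟩ := exists_min_word K X a
  rw [h] at hlen
  rw [List.length_eq_zero_iff] at hlen
  rw [hlen] at hl
  exact hl.symm.trans rfl

end A
end QMExt

namespace QMExt
section B
variable {G : Type*} [Group G] (K : Subgroup G) (X : Set G)

theorem theta_inl (k : ↥K) : theta K X (Coprod.inl k) = (k : G) := by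
  simp [theta, Coprod.lift_apply_inl]

theorem theta_inr_of (x : ↥X) : theta K X (Coprod.inr (FreeGroup.of x)) = (x : G) := by
  simp [theta, Coprod.lift_apply_inr]

theorem eta_inl (k : ↥K) : eta K X (Coprod.inl k) = k := by
  simp [eta, Coprod.lift_apply_inl]

theorem eta_inr (w : FreeGroup ↥X) : eta K X (Coprod.inr w) = 1 := by
  simp [eta, Coprod.lift_apply_inr]

/-- image of a letter in G -/
def toG : RelLetter K X → G
  | Sum.inl k => (k : G)
  | Sum.inr (x, true) => (x : G)
  | Sum.inr (x, false) => (x : G)⁻¹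

theorem theta_evalLetter (c : RelLetter K X) :
    theta K X (evalLetter K X c) = toG K X c := by
  rcases c with k | ⟨x, b⟩
  · simpa [evalLetter, toG] using theta_inl K X k
  · cases b
    · simp only [evalLetter, toG, map_inv]
      rw [theta_inr_of]
    · simpa [evalLetter, toG] using theta_inr_of K X x

theorem theta_evalWord (l : List (RelLetter K X)) :
    theta K X (evalWord K X l) = (l.map (toG K X)).prod := by
  induction l with
  | nil => simp [evalWord_nil]
  | cons c l ih =>
      rw [evalWord_cons, map_mul, theta_evalLetter, List.map_cons, List.prod_cons, ih]

/-- distance from 1 in the Cayley graph, via words in the free product -/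
noncomputable def dN (g : G) : ℕ :=
  sInf {n | ∃ l : List (RelLetter K X), theta K X (evalWord K X l) = g ∧ l.length = n}

theorem dN_set_nonempty (hsurj : Function.Surjective (theta K X)) (g : G) :
    {n | ∃ l : List (RelLetter K X), theta K X (evalWord K X l) = g ∧ l.length = n}.Nonempty := by
  obtain ⟨a, ha⟩ := hsurj g
  obtain ⟨l, hl⟩ := exists_word K X a
  exact ⟨l.length, l, by rw [hl, ha], rfl⟩

theorem dN_le (g : G) (l : List (RelLetter K X)) (h : theta K X (evalWord K X l) = g) :
    dN K X g ≤ l.length :=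
  Nat.sInf_le ⟨l, h, rfl⟩

theorem exists_geo_word (hsurj : Function.Surjective (theta K X)) (g : G) :
    ∃ l : List (RelLetter K X), theta K X (evalWord K X l) = g ∧ l.length = dN K X g := by
  have := Nat.sInf_mem (dN_set_nonempty K X hsurj g)
  obtain ⟨l, hl, hlen⟩ := this
  exact ⟨l, hl, hlen⟩

theorem dN_one : dN K X (1 : G) = 0 :=
  Nat.le_zero.mp (dN_le K X 1 [] (by simp [evalWord_nil]))

theorem dN_mul_le (hsurj : Function.Surjective (theta K X)) (g h : G) : dN K X (g * h) ≤ dN K X g + dN K X h := by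
  obtain ⟨lg, hg, hlg⟩ := exists_geo_word K X hsurj g
  obtain ⟨lh, hh, hlh⟩ := exists_geo_word K X hsurj h
  have := dN_le K X (g * h) (lg ++ lh) (by rw [evalWord_append, map_mul, hg, hh])
  simpa [hlg, hlh] using this

theorem dN_inv_le (hsurj : Function.Surjective (theta K X)) (g : G) : dN K X g⁻¹ ≤ dN K X g := by
  obtain ⟨lg, hg, hlg⟩ := exists_geo_word K X hsurj g
  have := dN_le K X g⁻¹ (invWord K X lg) (by rw [evalWord_invWord, map_inv, hg])
  simpa [invWord_length, hlg] using this

theorem dN_inv (hsurj : Function.Surjective (theta K X)) (g : G) : dN K X g⁻¹ = dN K X g :=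
  le_antisymm (dN_inv_le K X hsurj g) (by simpa using dN_inv_le K X hsurj g⁻¹)

theorem dN_eq_zero (hsurj : Function.Surjective (theta K X)) (g : G) (h : dN K X g = 0) : g = 1 := by
  obtain ⟨l, hl, hlen⟩ := exists_geo_word K X hsurj g
  rw [h, List.length_eq_zero_iff] at hlen
  rw [hlen] at hl
  simpa [evalWord_nil] using hl.symm

theorem dN_theta_wordLen (a : ↥K ∗ FreeGroup ↥X) : dN K X (theta K X a) ≤ wordLen K X a := by
  obtain ⟨l, hl, hlen⟩ := exists_min_word K X a
  have := dN_le K X (theta K X a) l (by rw [hl])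
  simpa [hlen] using this

/-- relation with `wordLenOn ((K : Set G) ∪ X)` -/
theorem toG_mem (hX : ∀ x ∈ X, x⁻¹ ∈ X) (c : RelLetter K X) : toG K X c ∈ (K : Set G) ∪ X := by
  rcases c with k | ⟨x, b⟩
  · exact Or.inl k.2
  · cases b
    · exact Or.inr (hX x x.2)
    · exact Or.inr x.2

theorem wordLenOn_le_dN (hX : ∀ x ∈ X, x⁻¹ ∈ X) (hsurj : Function.Surjective (theta K X)) (g : G) : wordLenOn ((K : Set G) ∪ X) g ≤ dN K X g := by
  obtain ⟨l, hl, hlen⟩ := exists_geo_word K X hsurj g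
  refine Nat.sInf_le ⟨l.map (toG K X), ?_, ?_, by simpa using hlen⟩
  · intro y hy
    simp only [List.mem_map] at hy
    obtain ⟨c, _, rfl⟩ := hy
    exact toG_mem K X hX c
  · rw [← theta_evalWord, hl]

theorem dN_le_wordLenOn (hX : ∀ x ∈ X, x⁻¹ ∈ X) (hsurj : Function.Surjective (theta K X)) (g : G) : dN K X g ≤ wordLenOn ((K : Set G) ∪ X) g := by
  have hne : {n | ∃ l : List G, (∀ y ∈ l, y ∈ (K : Set G) ∪ X) ∧ l.prod = g ∧ l.length = n}.Nonempty := by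
    obtain ⟨l, hl, hlen⟩ := exists_geo_word K X hsurj g
    refine ⟨l.length, l.map (toG K X), ?_, ?_, by simp⟩
    · intro y hy
      simp only [List.mem_map] at hy
      obtain ⟨c, _, rfl⟩ := hy
      exact toG_mem K X hX c
    · rw [← theta_evalWord, hl]
  obtain ⟨m, hmem, hprod, hlen⟩ := Nat.sInf_mem hne
  have key : ∀ m : List G, (∀ y ∈ m, y ∈ (K : Set G) ∪ X) → dN K X m.prod ≤ m.length := by
    intro m
    induction m with
    | nil => intro _; simpa using Nat.le_of_eq (dN_one K X)
    | cons y m ih =>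
        intro hmem
        have hy := hmem y (by simp)
        have hrec := ih (fun z hz => hmem z (by simp [hz]))
        have hstep : dN K X y ≤ 1 := by
          rcases hy with hy | hy
          · exact le_trans (dN_le K X y [Sum.inl ⟨y, hy⟩]
              (by rw [theta_evalWord]; simp [toG])) (by simp)
          · exact le_trans (dN_le K X y [Sum.inr (⟨y, hy⟩, true)]
              (by rw [theta_evalWord]; simp [toG])) (by simp)
        calc dN K X (y :: m).prod = dN K X (y * m.prod) := by rw [List.prod_cons]
          _ ≤ dN K X y + dN K X m.prod := dN_mul_le K X hsurj y m.prod
          _ ≤ 1 + m.length := by omega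
          _ = (y :: m).length := by simp [add_comm]
    
  calc dN K X g = dN K X m.prod := by rw [hprod]
    _ ≤ m.length := key m hmem
    _ = wordLenOn ((K : Set G) ∪ X) g := hlen

theorem wordLenOn_eq_dN (hX : ∀ x ∈ X, x⁻¹ ∈ X) (hsurj : Function.Surjective (theta K X)) (g : G) : wordLenOn ((K : Set G) ∪ X) g = dN K X g :=
  le_antisymm (wordLenOn_le_dN K X hX hsurj g) (dN_le_wordLenOn K X hX hsurj g)

end B
end QMExt

namespace QMExt
section C
variable {G : Type*} [Group G] (K : Subgroup G) (X : Set G)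

/-- real-valued word distance -/
noncomputable def dR (g h : G) : ℝ := (dN K X (g⁻¹ * h) : ℝ)

/-- Gromov product -/
noncomputable def gpr (x y w : G) : ℝ := (dR K X w x + dR K X w y - dR K X x y) / 2

theorem dR_nonneg (g h : G) : 0 ≤ dR K X g h := Nat.cast_nonneg _

theorem dR_self (g : G) : dR K X g g = 0 := by simp [dR, dN_one]

theorem dR_symm (hsurj : Function.Surjective (theta K X)) (g h : G) :
    dR K X g h = dR K X h g := by
  unfold dR
  rw [show h⁻¹ * g = (g⁻¹ * h)⁻¹ by group, dN_inv K X hsurj]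

theorem dR_triangle (hsurj : Function.Surjective (theta K X)) (g h u : G) :
    dR K X g u ≤ dR K X g h + dR K X h u := by
  unfold dR
  rw [show g⁻¹ * u = (g⁻¹ * h) * (h⁻¹ * u) by group]
  exact_mod_cast dN_mul_le K X hsurj _ _

theorem dR_left_inv (u g h : G) : dR K X (u * g) (u * h) = dR K X g h := by
  unfold dR
  rw [show (u * g)⁻¹ * (u * h) = g⁻¹ * h by group]

theorem dR_eq_zero (hsurj : Function.Surjective (theta K X)) {g h : G}
    (hd : dR K X g h = 0) : g = h := by
  unfold dR at hd
  have : dN K X (g⁻¹ * h) = 0 := by exact_mod_cast hd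
  have h1 := dN_eq_zero K X hsurj _ this
  have : h = g * (g⁻¹ * h) := by group
  rw [this, h1, mul_one]

theorem gpr_symm (hsurj : Function.Surjective (theta K X)) (x y w : G) :
    gpr K X x y w = gpr K X y x w := by
  unfold gpr; rw [dR_symm K X hsurj x y]; ring

theorem gpr_nonneg (hsurj : Function.Surjective (theta K X)) (x y w : G) :
    0 ≤ gpr K X x y w := by
  unfold gpr
  have := dR_triangle K X hsurj x w y
  rw [dR_symm K X hsurj w x] at *
  linarith

theorem gpr_le_left (hsurj : Function.Surjective (theta K X)) (x y w : G) :
    gpr K X x y w ≤ dR K X w x := by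
  unfold gpr
  have h3 := dR_triangle K X hsurj w x y
  linarith

theorem gpr_add (hsurj : Function.Surjective (theta K X)) (x y z : G) :
    gpr K X y z x + gpr K X x z y = dR K X x y := by
  unfold gpr
  rw [dR_symm K X hsurj y x]
  ring

/-- four point condition, translated -/
theorem hyp4 {δ : ℝ} (hX : ∀ x ∈ X, x⁻¹ ∈ X) (hsurj : Function.Surjective (theta K X))
    (hhyp : HypWith ((K : Set G) ∪ X) δ) (w x y z : G) :
    min (gpr K X x y w) (gpr K X y z w) - δ ≤ gpr K X x z w := by
  have hd : ∀ a b : G, wordDist ((K : Set G) ∪ X) a b = dR K X a b := by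
    intro a b
    unfold wordDist dR
    rw [wordLenOn_eq_dN K X hX hsurj]
  have := hhyp w x y z
  unfold gprod at this
  rw [hd, hd, hd, hd, hd, hd] at this
  exact this

/-- points along a path -/
noncomputable def pt (x : G) (l : List (RelLetter K X)) (i : ℕ) : G :=
  x * theta K X (evalWord K X (l.take i))

theorem pt_zero (x : G) (l : List (RelLetter K X)) : pt K X x l 0 = x := by
  simp [pt, evalWord_nil]

theorem pt_end (x : G) (l : List (RelLetter K X)) :
    pt K X x l l.length = x * theta K X (evalWord K X l) := by
  simp [pt]

theorem pt_sub {i j : ℕ} (hij : i ≤ j) (x : G) (l : List (RelLetter K X)) :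
    (pt K X x l i)⁻¹ * pt K X x l j =
      theta K X (evalWord K X ((l.drop i).take (j - i))) := by
  unfold pt
  have : l.take j = l.take i ++ (l.drop i).take (j - i) := by
    rw [← List.take_add]
    congr 1
    omega
  rw [this, evalWord_append, map_mul]
  group

theorem dR_pt_le (hsurj : Function.Surjective (theta K X)) {i j : ℕ} (hij : i ≤ j)
    (x : G) (l : List (RelLetter K X)) :
    dR K X (pt K X x l i) (pt K X x l j) ≤ (j : ℝ) - i := by
  unfold dR
  rw [pt_sub K X hij]
  have h1 : dN K X (theta K X (evalWord K X ((l.drop i).take (j - i)))) ≤ j - i := by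
    refine le_trans (dN_le K X _ _ rfl) ?_
    simpa using (List.length_take_le _ _)
  have : ((j - i : ℕ) : ℝ) = (j : ℝ) - i := by
    push_cast [Nat.cast_sub hij]; ring
  calc (dN K X (theta K X (evalWord K X ((l.drop i).take (j - i)))) : ℝ)
      ≤ ((j - i : ℕ) : ℝ) := by exact_mod_cast h1
    _ = (j : ℝ) - i := this

/-- geodesic path predicate (as a path of points) -/
def PathGeo (x : G) (l : List (RelLetter K X)) : Prop :=
  ∀ i j : ℕ, i ≤ j → j ≤ l.length → dR K X (pt K X x l i) (pt K X x l j) = (j : ℝ) - i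

/-- local geodesic path predicate -/
def PathLocGeo (kk : ℕ) (x : G) (l : List (RelLetter K X)) : Prop :=
  ∀ i j : ℕ, i ≤ j → j ≤ l.length → j - i ≤ kk →
    dR K X (pt K X x l i) (pt K X x l j) = (j : ℝ) - i

theorem PathGeo.locgeo {x : G} {l : List (RelLetter K X)} (h : PathGeo K X x l) (kk : ℕ) :
    PathLocGeo K X kk x l := fun i j hij hj _ => h i j hij hj

end C
end QMExt

namespace QMExt
section D
variable {G : Type*} [Group G] (K : Subgroup G) (X : Set G)

theorem evalWord_take_drop (l : List (RelLetter K X)) (j : ℕ) :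
    evalWord K X l = evalWord K X (l.take j) * evalWord K X (l.drop j) := by
  rw [← evalWord_append, List.take_append_drop]

theorem evalWord_take_mid {i j : ℕ} (hij : i ≤ j) (l : List (RelLetter K X)) :
    evalWord K X (l.take j) = evalWord K X (l.take i) * evalWord K X ((l.drop i).take (j - i)) := by
  rw [← evalWord_append]
  congr 1
  rw [← List.take_add]
  congr 1
  omega

theorem exists_geo_path (hsurj : Function.Surjective (theta K X)) (u : G) :
    ∃ l : List (RelLetter K X), theta K X (evalWord K X l) = u ∧ l.length = dN K X u ∧
      ∀ x : G, PathGeo K X x l := by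
  obtain ⟨l, hl, hlen⟩ := exists_geo_word K X hsurj u
  refine ⟨l, hl, hlen, ?_⟩
  intro x i j hij hj
  have hle := dR_pt_le K X hsurj hij x l
  have hmid : (pt K X x l i)⁻¹ * pt K X x l j =
      theta K X (evalWord K X ((l.drop i).take (j - i))) := pt_sub K X hij x l
  have hge : j - i ≤ dN K X (theta K X (evalWord K X ((l.drop i).take (j - i)))) := by
    obtain ⟨m, hm, hmlen⟩ := exists_geo_word K X hsurj
      (theta K X (evalWord K X ((l.drop i).take (j - i))))
    have hw' : theta K X (evalWord K X (l.take i ++ m ++ l.drop j)) = u := by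
      rw [evalWord_append, evalWord_append, map_mul, map_mul, hm,
        ← map_mul, ← evalWord_take_mid K X hij, ← map_mul, ← evalWord_take_drop, hl]
    have hle2 := dN_le K X u _ hw'
    have hlength : (l.take i ++ m ++ l.drop j).length = i + m.length + (l.length - j) := by
      simp [List.length_take, List.length_drop]
      omega
    rw [hlength, hmlen] at hle2
    omega
  have hdn : dR K X (pt K X x l i) (pt K X x l j)
      = (dN K X (theta K X (evalWord K X ((l.drop i).take (j - i)))) : ℝ) := by
    unfold dR
    rw [hmid]
  refine le_antisymm (by rw [hdn] at hle ⊢; exact hle) ?_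
  rw [hdn]
  have : ((j - i : ℕ) : ℝ) = (j : ℝ) - i := by
    have := Nat.cast_sub hij (R := ℝ)
    linarith [this]
  calc (j : ℝ) - i = ((j - i : ℕ) : ℝ) := this.symm
    _ ≤ _ := by exact_mod_cast hge

theorem pt_invWord (x : G) (l : List (RelLetter K X)) {i : ℕ} (hi : i ≤ l.length) :
    pt K X (x * theta K X (evalWord K X l)) (invWord K X l) i = pt K X x l (l.length - i) := by
  have hsplit : invWord K X l =
      invWord K X (l.drop (l.length - i)) ++ invWord K X (l.take (l.length - i)) := by
    unfold invWord
    rw [← List.reverse_append, ← List.map_append, List.take_append_drop]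
  have htake : (invWord K X l).take i = invWord K X (l.drop (l.length - i)) := by
    rw [hsplit]
    have hlen : (invWord K X (l.drop (l.length - i))).length = i := by
      rw [invWord_length, List.length_drop]
      omega
    exact List.take_left' hlen
  unfold pt
  rw [htake, evalWord_invWord, map_inv]
  have : evalWord K X l = evalWord K X (l.take (l.length - i)) *
      evalWord K X (l.drop (l.length - i)) := evalWord_take_drop K X l _
  rw [this, map_mul]
  group

theorem PathLocGeo.rev (hsurj : Function.Surjective (theta K X)) {kk : ℕ} {x : G}
    {l : List (RelLetter K X)} (h : PathLocGeo K X kk x l) :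
    PathLocGeo K X kk (x * theta K X (evalWord K X l)) (invWord K X l) := by
  intro i j hij hj hk
  rw [invWord_length] at hj
  rw [pt_invWord K X x l (le_trans hij hj), pt_invWord K X x l hj,
    dR_symm K X hsurj]
  have h1 : l.length - j ≤ l.length - i := by omega
  have h2 : l.length - i ≤ l.length := by omega
  have h3 : (l.length - i) - (l.length - j) ≤ kk := by omega
  have := h _ _ h1 h2 h3
  rw [this]
  have c1 : ((l.length - i : ℕ) : ℝ) = (l.length : ℝ) - i := by
    have := Nat.cast_sub (le_trans hij hj) (R := ℝ); linarith
  have c2 : ((l.length - j : ℕ) : ℝ) = (l.length : ℝ) - j := by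
    have := Nat.cast_sub hj (R := ℝ); linarith
  rw [c1, c2]
  ring

/-- The corner lemma: points at equal parameters on two geodesics from `x` are close. -/
theorem corner {δ : ℝ} (hδ : 0 ≤ δ) (hX : ∀ x ∈ X, x⁻¹ ∈ X)
    (hsurj : Function.Surjective (theta K X)) (hhyp : HypWith ((K : Set G) ∪ X) δ)
    {x y z : G} {l₁ l₂ : List (RelLetter K X)}
    (h₁ : PathGeo K X x l₁) (e₁ : pt K X x l₁ l₁.length = y)
    (h₂ : PathGeo K X x l₂) (e₂ : pt K X x l₂ l₂.length = z)
    {t : ℕ} (ht₁ : t ≤ l₁.length) (ht₂ : t ≤ l₂.length)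
    (htp : (t : ℝ) ≤ gpr K X y z x + 1) :
    dR K X (pt K X x l₁ t) (pt K X x l₂ t) ≤ 4 * δ + 2 := by
  set u := pt K X x l₁ t with hu
  set v := pt K X x l₂ t with hv
  have dxu : dR K X x u = t := by
    have := h₁ 0 t (Nat.zero_le _) ht₁
    rw [pt_zero] at this
    simpa using this
  have dxv : dR K X x v = t := by
    have := h₂ 0 t (Nat.zero_le _) ht₂
    rw [pt_zero] at this
    simpa using this
  have duy : dR K X u y = (l₁.length : ℝ) - t := by
    have := h₁ t l₁.length ht₁ le_rfl
    rw [e₁] at this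
    exact this
  have dvz : dR K X v z = (l₂.length : ℝ) - t := by
    have := h₂ t l₂.length ht₂ le_rfl
    rw [e₂] at this
    exact this
  have dxy : dR K X x y = (l₁.length : ℝ) := by
    have := h₁ 0 l₁.length (Nat.zero_le _) le_rfl
    rw [pt_zero, e₁] at this
    simpa using this
  have dxz : dR K X x z = (l₂.length : ℝ) := by
    have := h₂ 0 l₂.length (Nat.zero_le _) le_rfl
    rw [pt_zero, e₂] at this
    simpa using this
  have guy : gpr K X u y x = t := by
    unfold gpr
    rw [dxu, dxy, duy]
    ring
  have gvz : gpr K X v z x = t := by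
    unfold gpr
    rw [dxv, dxz, dvz]
    ring
  have h4a := hyp4 K X hX hsurj hhyp x u y z
  have h4b := hyp4 K X hX hsurj hhyp x u z v
  have gzv : gpr K X z v x = t := by rw [gpr_symm K X hsurj z v x, gvz]
  have huv : gpr K X u v x ≥ (t : ℝ) - 1 - 2 * δ := by
    have hmin1 : min (gpr K X u y x) (gpr K X y z x) ≥ (t : ℝ) - 1 := by
      rw [guy]
      exact le_min (by linarith) (by linarith)
    have huz : gpr K X u z x ≥ (t : ℝ) - 1 - δ := by linarith [h4a]
    have hmin2 : min (gpr K X u z x) (gpr K X z v x) ≥ (t : ℝ) - 1 - δ := by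
      rw [gzv]
      exact le_min (by linarith) (by linarith)
    linarith [h4b]
  have : dR K X u v = dR K X x u + dR K X x v - 2 * gpr K X u v x := by
    have e : gpr K X u v x = (dR K X x u + dR K X x v - dR K X u v) / 2 := rfl
    rw [e]
    ring
  rw [this, dxu, dxv]
  linarith

end D
end QMExt

namespace QMExt
section E
variable {G : Type*} [Group G] (K : Subgroup G) (X : Set G)

theorem pt_subpath {x : G} {l : List (RelLetter K X)} {i c a : ℕ} (hac : a ≤ c) :
    pt K X (pt K X x l i) ((l.drop i).take c) a = pt K X x l (i + a) := by
  unfold pt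
  rw [List.take_take, min_eq_left hac]
  have h := pt_sub K X (show i ≤ i + a by omega) x l
  unfold pt at h
  have h2 : (i + a) - i = a := by omega
  rw [h2] at h
  rw [← h]
  group

theorem sub_length {l : List (RelLetter K X)} {i c : ℕ} (h : i + c ≤ l.length) :
    ((l.drop i).take c).length = c := by
  simp [List.length_take, List.length_drop]
  omega

theorem sub_pathgeo {kk : ℕ} {x : G} {l : List (RelLetter K X)} (hl : PathLocGeo K X kk x l)
    {i c : ℕ} (hc : c ≤ kk) (hic : i + c ≤ l.length) :
    PathGeo K X (pt K X x l i) ((l.drop i).take c) := by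
  intro a b hab hb
  rw [sub_length K X hic] at hb
  rw [pt_subpath K X (le_trans hab hb), pt_subpath K X hb]
  have := hl (i + a) (i + b) (by omega) (by omega) (by omega)
  rw [this]
  push_cast
  ring

theorem geo_from_to (hsurj : Function.Surjective (theta K X)) (u v : G) :
    ∃ g : List (RelLetter K X), PathGeo K X u g ∧ pt K X u g g.length = v ∧
      (g.length : ℝ) = dR K X u v := by
  obtain ⟨g, hg, hlen, hgeo⟩ := exists_geo_path K X hsurj (u⁻¹ * v)
  refine ⟨g, hgeo u, ?_, ?_⟩
  · rw [pt_end, hg]; group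
  · rw [hlen]; rfl

theorem PathGeo.rev (hsurj : Function.Surjective (theta K X)) {x : G}
    {l : List (RelLetter K X)} (h : PathGeo K X x l) :
    PathGeo K X (pt K X x l l.length) (invWord K X l) := by
  have hloc : PathLocGeo K X l.length x l := fun i j hij hj _ => h i j hij hj
  have := hloc.rev K X hsurj
  rw [pt_end]
  intro i j hij hj
  exact this i j hij hj (by rw [invWord_length] at hj; omega)

theorem pt_invWord' {x : G} {l : List (RelLetter K X)} {i : ℕ} (hi : i ≤ l.length) :
    pt K X (pt K X x l l.length) (invWord K X l) i = pt K X x l (l.length - i) := by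
  rw [pt_end]
  exact pt_invWord K X x l hi

/-- connections along a geodesic -/
theorem gamma_conn (hsurj : Function.Surjective (theta K X)) {x : G} {l₀ : List (RelLetter K X)}
    (hg : PathGeo K X x l₀) {ta tb : ℕ} (hta : ta ≤ l₀.length) (htb : tb ≤ l₀.length) :
    ∃ gq : List (RelLetter K X), PathGeo K X (pt K X x l₀ ta) gq ∧
      pt K X (pt K X x l₀ ta) gq gq.length = pt K X x l₀ tb ∧
      (∀ a ≤ gq.length, ∃ t ≤ l₀.length, pt K X (pt K X x l₀ ta) gq a = pt K X x l₀ t) ∧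
      (gq.length : ℝ) = dR K X (pt K X x l₀ ta) (pt K X x l₀ tb) := by
  have hloc : PathLocGeo K X l₀.length x l₀ := fun i j hij hj _ => hg i j hij hj
  rcases le_total ta tb with hab | hba
  · refine ⟨(l₀.drop ta).take (tb - ta), ?_, ?_, ?_, ?_⟩
    · exact sub_pathgeo K X hloc (by omega) (by omega)
    · rw [sub_length K X (by omega), pt_subpath K X le_rfl]
      congr 1; omega
    · intro a ha
      rw [sub_length K X (by omega)] at ha
      exact ⟨ta + a, by omega, pt_subpath K X ha⟩
    · rw [sub_length K X (by omega), hg ta tb hab htb]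
      push_cast [Nat.cast_sub hab]; ring
  · -- tb ≤ ta : reverse the subpath from tb to ta
    set sub := (l₀.drop tb).take (ta - tb) with hsub
    have hslen : sub.length = ta - tb := sub_length K X (by omega)
    have hsgeo : PathGeo K X (pt K X x l₀ tb) sub := sub_pathgeo K X hloc (by omega) (by omega)
    have hsend : pt K X (pt K X x l₀ tb) sub sub.length = pt K X x l₀ ta := by
      rw [hslen, pt_subpath K X le_rfl]
      congr 1; omega
    refine ⟨invWord K X sub, ?_, ?_, ?_, ?_⟩
    · have := hsgeo.rev K X hsurj
      rw [hsend] at this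
      exact this
    · rw [invWord_length, ← hsend, pt_invWord' K X (by rfl)]
      rw [Nat.sub_self]
      rw [pt_subpath K X (Nat.zero_le _), Nat.add_zero]
    · intro a ha
      rw [invWord_length, hslen] at ha
      refine ⟨tb + ((ta - tb) - a), by omega, ?_⟩
      rw [← hsend, pt_invWord' K X (by rw [hslen]; omega), hslen]
      exact pt_subpath K X (by omega)
    · rw [invWord_length, hslen, dR_symm K X hsurj, hg tb ta hba hta]
      push_cast [Nat.cast_sub hba]; ring
end E
end QMExt

namespace QMExt
section F
variable {G : Type*} [Group G] (K : Subgroup G) (X : Set G)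

/-- Main geometric lemma: a `2*half`-local geodesic stays near any geodesic with the
same endpoints. -/
theorem locgeo_near_geo {δ : ℝ} (hδ : 0 ≤ δ) (hX : ∀ x ∈ X, x⁻¹ ∈ X)
    (hsurj : Function.Surjective (theta K X)) (hhyp : HypWith ((K : Set G) ∪ X) δ)
    {half : ℕ} (hhalf : 8 * δ + 5 ≤ (half : ℝ))
    {x : G} {l l₀ : List (RelLetter K X)} (hl : PathLocGeo K X (2 * half) x l)
    (hg : PathGeo K X x l₀) (hend : pt K X x l₀ l₀.length = pt K X x l l.length) :
    ∀ i ≤ l.length, ∃ t ≤ l₀.length,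
      dR K X (pt K X x l i) (pt K X x l₀ t) ≤ 8 * δ + 4 := by
  set n := l.length with hn
  set m := l₀.length with hm
  set P : ℕ → G := fun i => pt K X x l i with hP
  set Q : ℕ → G := fun t => pt K X x l₀ t with hQ
  -- distance to the geodesic
  set Dd : ℕ → ℕ := fun i => sInf {c : ℕ | ∃ t, t ≤ m ∧ dN K X ((P i)⁻¹ * Q t) = c} with hDd
  have Dne : ∀ i, {c : ℕ | ∃ t, t ≤ m ∧ dN K X ((P i)⁻¹ * Q t) = c}.Nonempty :=
    fun i => ⟨_, 0, Nat.zero_le _, rfl⟩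
  have Dattain : ∀ i, ∃ t, t ≤ m ∧ dN K X ((P i)⁻¹ * Q t) = Dd i := fun i => Nat.sInf_mem (Dne i)
  have Dle : ∀ i t, t ≤ m → Dd i ≤ dN K X ((P i)⁻¹ * Q t) := by
    intro i t ht
    exact Nat.sInf_le ⟨t, ht, rfl⟩
  have DdR : ∀ i t, t ≤ m → (Dd i : ℝ) ≤ dR K X (P i) (Q t) := by
    intro i t ht
    have h := Dle i t ht
    unfold dR
    exact_mod_cast h
  -- reduce to bounding the max of Dd
  suffices hmax : ∀ i ≤ n, (Dd i : ℝ) ≤ 8 * δ + 4 by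
    intro i hi
    obtain ⟨t, ht, hdt⟩ := Dattain i
    refine ⟨t, ht, ?_⟩
    have : dR K X (P i) (Q t) = (Dd i : ℝ) := by
      unfold dR
      exact_mod_cast congrArg (Nat.cast (R := ℝ)) hdt
    rw [this]
    exact hmax i hi
  -- pick the maximizer
  obtain ⟨istar, histar, hmaxi⟩ := Finset.exists_max_image (Finset.range (n + 1)) Dd
    ⟨0, by simp⟩
  simp only [Finset.mem_range] at histar
  suffices hstar : (Dd istar : ℝ) ≤ 8 * δ + 4 by
    intro i hi
    have := hmaxi i (Finset.mem_range.mpr (by omega))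
    calc (Dd i : ℝ) ≤ (Dd istar : ℝ) := by exact_mod_cast this
      _ ≤ _ := hstar
  set i := istar with hi
  have hin : i ≤ n := by omega
  set im := i - half with him
  set ip := min (i + half) n with hip
  set s1 := i - im with hs1def
  set s2 := ip - i with hs2def
  set c := ip - im with hcdef
  have hcs : c = s1 + s2 := by omega
  have him_le : im ≤ i := by omega
  have hip_ge : i ≤ ip := by omega
  have hipn : ip ≤ n := by omega
  have hs1h : s1 = half ∨ im = 0 := by omega
  have hs2h : s2 = half ∨ ip = n := by omega
  have hckk : c ≤ 2 * half := by omega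
  have hicn : im + c ≤ n := by omega
  set u := P im with hu
  set v := P ip with hv
  -- nearest points on γ for u and v
  obtain ⟨tu, htu, htud⟩ := Dattain im
  obtain ⟨tv, htv, htvd⟩ := Dattain ip
  set u' := Q tu with hu'
  set v' := Q tv with hv'
  have hduu' : dR K X u u' = (Dd im : ℝ) := by
    unfold dR
    exact_mod_cast congrArg (Nat.cast (R := ℝ)) htud
  have hdvv' : dR K X v v' = (Dd ip : ℝ) := by
    unfold dR
    exact_mod_cast congrArg (Nat.cast (R := ℝ)) htvd
  have hDu_le : Dd im ≤ Dd i := hmaxi im (Finset.mem_range.mpr (by omega))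
  have hDv_le : Dd ip ≤ Dd i := hmaxi ip (Finset.mem_range.mpr (by omega))
  -- boundary identities
  have hbd0 : im = 0 → Dd im = 0 := by
    intro h0
    have : dN K X ((P im)⁻¹ * Q 0) = 0 := by
      rw [h0]
      show dN K X ((pt K X x l 0)⁻¹ * pt K X x l₀ 0) = 0
      rw [pt_zero, pt_zero, inv_mul_cancel, dN_one]
    have := Dle im 0 (Nat.zero_le _)
    omega
  have hbdn : ip = n → Dd ip = 0 := by
    intro h0
    have : dN K X ((P ip)⁻¹ * Q m) = 0 := by
      rw [h0]
      show dN K X ((pt K X x l n)⁻¹ * pt K X x l₀ m) = 0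
      rw [hend, inv_mul_cancel, dN_one]
    have := Dle ip m le_rfl
    omega
  -- the subpath of l from im to ip, a geodesic
  set sub := (l.drop im).take c with hsub
  have hsublen : sub.length = c := sub_length K X hicn
  have hsubgeo : PathGeo K X u sub := sub_pathgeo K X hl hckk hicn
  have hsubpt : ∀ a, a ≤ c → pt K X u sub a = P (im + a) := fun a ha => pt_subpath K X ha
  have hsubend : pt K X u sub sub.length = v := by
    rw [hsublen, hsubpt c le_rfl]
    show P (im + c) = P ip
    congr 1
    omega
  have hsubp : pt K X u sub s1 = P i := by
    rw [hsubpt s1 (by omega)]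
    congr 1
    omega
  have hduv : dR K X u v = (s1 : ℝ) + s2 := by
    have := hl im ip (by omega) hipn (by omega)
    rw [show dR K X (pt K X x l im) (pt K X x l ip) = dR K X u v from rfl] at this
    rw [this]
    have h1 : ((ip : ℝ)) - im = (s1 : ℝ) + s2 := by
      have e1 : (s1 : ℝ) = (i : ℝ) - im := by
        rw [hs1def]; push_cast [Nat.cast_sub him_le]; ring
      have e2 : (s2 : ℝ) = (ip : ℝ) - i := by
        rw [hs2def]; push_cast [Nat.cast_sub hip_ge]; ring
      rw [e1, e2]; ring
    exact h1
  -- geodesics to the projections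
  obtain ⟨g₁, hg₁geo, hg₁end, hg₁len⟩ := geo_from_to K X hsurj u v'
  obtain ⟨g₂, hg₂geo, hg₂end, hg₂len⟩ := geo_from_to K X hsurj u u'
  obtain ⟨g₄, hg₄geo, hg₄end, hg₄len⟩ := geo_from_to K X hsurj v v'
  -- main case split
  have hsplit1 : gpr K X v v' u + gpr K X u v' v = dR K X u v := gpr_add K X hsurj u v v'
  have hδ2 : (0:ℝ) ≤ 8 * δ + 4 := by linarith
  rcases le_or_gt (s1 : ℝ) (gpr K X v v' u) with hcase1 | hcase1
  · -- CASE I : corner at u between sub and g₁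
    have hs1g₁ : (s1 : ℝ) ≤ (g₁.length : ℝ) := by
      have h1 : gpr K X v v' u = gpr K X v' v u := gpr_symm K X hsurj v v' u
      have h2 := gpr_le_left K X hsurj v' v u
      rw [hg₁len]
      linarith
    have hs1g₁n : s1 ≤ g₁.length := by exact_mod_cast hs1g₁
    have hcor1 := corner K X hδ hX hsurj hhyp hsubgeo hsubend hg₁geo hg₁end
      (t := s1) (by omega) hs1g₁n (by linarith)
    rw [hsubp] at hcor1
    set q := pt K X u g₁ s1 with hq
    -- second split within triangle (u, v', u')
    have hsplit2 : gpr K X v' u' u + gpr K X u u' v' = dR K X u v' := gpr_add K X hsurj u v' u'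
    rcases le_or_gt (s1 : ℝ) (gpr K X v' u' u) with hcase2 | hcase2
    · -- subcase Ia : corner at u between g₁ and g₂
      have hs1g₂ : s1 ≤ g₂.length := by
        have h1 : gpr K X v' u' u = gpr K X u' v' u := gpr_symm K X hsurj v' u' u
        have h2 := gpr_le_left K X hsurj u' v' u
        have : (s1 : ℝ) ≤ (g₂.length : ℝ) := by rw [hg₂len]; linarith
        exact_mod_cast this
      have hcor2 := corner K X hδ hX hsurj hhyp hg₁geo hg₁end hg₂geo hg₂end
        (t := s1) hs1g₁n hs1g₂ (by linarith)
      set q' := pt K X u g₂ s1 with hq'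
      have hq'u' : dR K X q' u' = (Dd im : ℝ) - s1 := by
        have := hg₂geo s1 g₂.length hs1g₂ le_rfl
        rw [hg₂end] at this
        rw [this, hg₂len, hduu']
      have hchain : (Dd i : ℝ) ≤ (8 * δ + 4) + ((Dd im : ℝ) - s1) := by
        have h1 := DdR i tu htu
        have h2 := dR_triangle K X hsurj (P i) q u'
        have h3 := dR_triangle K X hsurj q q' u'
        calc (Dd i : ℝ) ≤ dR K X (P i) u' := h1
          _ ≤ dR K X (P i) q + dR K X q u' := h2
          _ ≤ dR K X (P i) q + (dR K X q q' + dR K X q' u') := by linarith [h3]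
          _ ≤ (4*δ+2) + ((4*δ+2) + ((Dd im : ℝ) - s1)) := by
              rw [hq'u'] at *
              linarith [hcor1, hcor2]
          _ = (8 * δ + 4) + ((Dd im : ℝ) - s1) := by ring
      rcases hs1h with hfull | h0
      · exfalso
        have hDle : (Dd im : ℝ) ≤ (Dd i : ℝ) := by exact_mod_cast hDu_le
        have : (s1 : ℝ) = (half : ℝ) := by exact_mod_cast hfull
        linarith
      · have : Dd im = 0 := hbd0 h0
        rw [this] at hchain
        simp only [Nat.cast_zero] at hchain
        have : (0:ℝ) ≤ (s1 : ℝ) := Nat.cast_nonneg _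
        linarith
    · -- subcase Ib : corner at v' between rev g₁ and a geodesic along γ
      set s1p := g₁.length - s1 with hs1p
      have hs1pR : (s1p : ℝ) = (g₁.length : ℝ) - s1 := by
        rw [hs1p]; push_cast [Nat.cast_sub hs1g₁n]; ring
      have hs1ple : (s1p : ℝ) ≤ gpr K X u u' v' := by
        rw [hs1pR, hg₁len]
        linarith
      obtain ⟨gq, hgqgeo, hgqend, hgqpts, hgqlen⟩ := gamma_conn K X hsurj hg htv htu
      have hgqlen' : (gq.length : ℝ) = dR K X v' u' := hgqlen
      have hs1pgq : s1p ≤ gq.length := by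
        have h1 : gpr K X u u' v' = gpr K X u' u v' := gpr_symm K X hsurj u u' v'
        have h2 := gpr_le_left K X hsurj u' u v'
        have : (s1p : ℝ) ≤ (gq.length : ℝ) := by rw [hgqlen']; linarith
        exact_mod_cast this
      -- reversed g₁, from v'
      have hrevgeo : PathGeo K X v' (invWord K X g₁) := by
        have := hg₁geo.rev K X hsurj
        rw [hg₁end] at this
        exact this
      have hrevend : pt K X v' (invWord K X g₁) (invWord K X g₁).length = u := by
        rw [invWord_length, ← hg₁end, pt_invWord' K X le_rfl, Nat.sub_self, pt_zero]
      have hrevlen : s1p ≤ (invWord K X g₁).length := by rw [invWord_length]; omega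
      have hcor3 := corner K X hδ hX hsurj hhyp hrevgeo hrevend hgqgeo hgqend
        (t := s1p) hrevlen hs1pgq (by linarith)
      have hqpt : pt K X v' (invWord K X g₁) s1p = q := by
        rw [← hg₁end, pt_invWord' K X (by omega)]
        congr 1
        omega
      rw [hqpt] at hcor3
      obtain ⟨t'', ht'', hq''⟩ := hgqpts s1p hs1pgq
      rw [hq''] at hcor3
      have h1 := DdR i t'' ht''
      have h2 := dR_triangle K X hsurj (P i) q (Q t'')
      linarith [hcor1]
  · -- CASE II : corner at v between rev sub and g₄
    have hcase2' : (s2 : ℝ) ≤ gpr K X u v' v := by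
      rw [hduv] at hsplit1
      linarith
    have hs2g₄ : s2 ≤ g₄.length := by
      have h1 : gpr K X u v' v = gpr K X v' u v := gpr_symm K X hsurj u v' v
      have h2 := gpr_le_left K X hsurj v' u v
      have : (s2 : ℝ) ≤ (g₄.length : ℝ) := by rw [hg₄len]; linarith
      exact_mod_cast this
    have hrevgeo : PathGeo K X v (invWord K X sub) := by
      have := hsubgeo.rev K X hsurj
      rw [hsubend] at this
      exact this
    have hrevend : pt K X v (invWord K X sub) (invWord K X sub).length = u := by
      rw [invWord_length, ← hsubend, pt_invWord' K X le_rfl, Nat.sub_self, pt_zero]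
    have hrevs2 : s2 ≤ (invWord K X sub).length := by rw [invWord_length, hsublen]; omega
    have hcor4 := corner K X hδ hX hsurj hhyp hrevgeo hrevend hg₄geo hg₄end
      (t := s2) hrevs2 hs2g₄ (by linarith)
    have hppt : pt K X v (invWord K X sub) s2 = P i := by
      rw [← hsubend, pt_invWord' K X (by rw [hsublen]; omega), hsublen]
      rw [show c - s2 = s1 by omega]
      exact hsubp
    rw [hppt] at hcor4
    set q₂ := pt K X v g₄ s2 with hq₂
    have hq₂v' : dR K X q₂ v' = (Dd ip : ℝ) - s2 := by
      have := hg₄geo s2 g₄.length hs2g₄ le_rfl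
      rw [hg₄end] at this
      rw [this, hg₄len, hdvv']
    have hchain : (Dd i : ℝ) ≤ (4 * δ + 2) + ((Dd ip : ℝ) - s2) := by
      have h1 := DdR i tv htv
      have h2 := dR_triangle K X hsurj (P i) q₂ v'
      calc (Dd i : ℝ) ≤ dR K X (P i) v' := h1
        _ ≤ dR K X (P i) q₂ + dR K X q₂ v' := h2
        _ ≤ (4*δ+2) + ((Dd ip : ℝ) - s2) := by rw [hq₂v']; linarith [hcor4]
    rcases hs2h with hfull | h0
    · exfalso
      have hDle : (Dd ip : ℝ) ≤ (Dd i : ℝ) := by exact_mod_cast hDv_le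
      have : (s2 : ℝ) = (half : ℝ) := by exact_mod_cast hfull
      linarith
    · have : Dd ip = 0 := hbdn h0
      rw [this] at hchain
      simp only [Nat.cast_zero] at hchain
      have : (0:ℝ) ≤ (s2 : ℝ) := Nat.cast_nonneg _
      linarith

end F
end QMExt

namespace QMExt
section Fg
variable {G : Type*} [Group G] (K : Subgroup G) (X : Set G)

/-- a closed local geodesic is short -/
theorem closed_locgeo {δ : ℝ} (hδ : 0 ≤ δ) (hX : ∀ x ∈ X, x⁻¹ ∈ X)
    (hsurj : Function.Surjective (theta K X)) (hhyp : HypWith ((K : Set G) ∪ X) δ)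
    {half : ℕ} (hhalf : 8 * δ + 5 ≤ (half : ℝ))
    {x : G} {l : List (RelLetter K X)} (hl : PathLocGeo K X (2 * half) x l)
    (hclosed : pt K X x l l.length = x) :
    l.length < 2 * half := by
  by_contra hcon
  push_neg at hcon
  have hgeo0 : PathGeo K X x ([] : List (RelLetter K X)) := by
    intro i j hij hj
    simp only [List.length_nil, Nat.le_zero] at hj
    subst hj
    have : i = 0 := by omega
    subst this
    simp [dR_self]
  have hend : pt K X x ([] : List (RelLetter K X)) ([] : List (RelLetter K X)).length
      = pt K X x l l.length := by
    rw [hclosed]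
    simp [pt_zero]
  have := locgeo_near_geo K X hδ hX hsurj hhyp hhalf hl hgeo0 hend (2 * half) (by omega)
  obtain ⟨t, ht, hdt⟩ := this
  simp only [List.length_nil, Nat.le_zero] at ht
  subst ht
  rw [pt_zero] at hdt
  have hdist : dR K X (pt K X x l (2 * half)) x = 2 * (half : ℝ) := by
    have := hl 0 (2 * half) (Nat.zero_le _) hcon le_rfl
    rw [pt_zero] at this
    rw [dR_symm K X hsurj, this]
    push_cast; ring
  rw [hdist] at hdt
  linarith

/-- every point of the geodesic is near the local geodesic -/
theorem geo_near_locgeo {δ : ℝ} (hδ : 0 ≤ δ) (hX : ∀ x ∈ X, x⁻¹ ∈ X)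
    (hsurj : Function.Surjective (theta K X)) (hhyp : HypWith ((K : Set G) ∪ X) δ)
    {half : ℕ} (hhalf : 8 * δ + 5 ≤ (half : ℝ))
    {x : G} {l l₀ : List (RelLetter K X)} (hl : PathLocGeo K X (2 * half) x l)
    (hg : PathGeo K X x l₀) (hend : pt K X x l₀ l₀.length = pt K X x l l.length) :
    ∀ t ≤ l₀.length, ∃ i ≤ l.length,
      dR K X (pt K X x l₀ t) (pt K X x l i) ≤ 3 * (8 * δ + 4) + 1 := by
  have hnear := locgeo_near_geo K X hδ hX hsurj hhyp hhalf hl hg hend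
  set n := l.length with hn
  set m := l₀.length with hm
  set R : ℝ := 8 * δ + 4 with hR
  have hR0 : 0 ≤ R := by rw [hR]; linarith
  intro t ht
  by_cases hn0 : n = 0
  · refine ⟨0, by omega, ?_⟩
    have hm0 : m = 0 := by
      have h1 : dR K X (pt K X x l₀ 0) (pt K X x l₀ m) = (m : ℝ) := by
        have := hg 0 m (Nat.zero_le _) le_rfl
        rw [this]; simp
      have h2 : pt K X x l₀ m = x := by
        rw [hend, hn0, pt_zero]
      rw [h2, pt_zero, dR_self] at h1
      exact_mod_cast h1.symm
    have ht0 : t = 0 := by omega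
    rw [ht0, pt_zero, pt_zero, dR_self]
    linarith
  · have hpos : 1 ≤ n := by omega
    have hch : ∀ i : ℕ, ∃ tt : ℕ, tt ≤ m ∧ dR K X (pt K X x l (min i n)) (pt K X x l₀ tt) ≤ R ∧
        (i = 0 → tt = 0) ∧ (n ≤ i → tt = m) := by
      intro i
      rcases Nat.eq_zero_or_pos i with rfl | hip
      · refine ⟨0, Nat.zero_le _, ?_, fun _ => rfl, by omega⟩
        simp only [Nat.min_eq_left (Nat.zero_le n), pt_zero]
        rw [dR_self]
        exact hR0
      · rcases le_or_gt n i with hni | hni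
        · refine ⟨m, le_rfl, ?_, by omega, fun _ => rfl⟩
          rw [min_eq_right hni, ← hend, dR_symm K X hsurj, dR_self]
          exact hR0
        · obtain ⟨tt, htt, hdtt⟩ := hnear i (by omega)
          refine ⟨tt, htt, ?_, by omega, by omega⟩
          rw [min_eq_left (by omega)]
          exact hdtt
    choose f hf1 hf2 hf30 hf3n using hch
    have hjump : ∀ i, i + 1 ≤ n → |(f (i+1) : ℝ) - (f i : ℝ)| ≤ 2 * R + 1 := by
      intro i hi
      have h1 := hf2 i
      have h2 := hf2 (i+1)
      rw [min_eq_left (by omega)] at h1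
      rw [min_eq_left (by omega)] at h2
      have hstep : dR K X (pt K X x l i) (pt K X x l (i+1)) ≤ 1 := by
        have := dR_pt_le K X hsurj (show i ≤ i + 1 by omega) x l
        push_cast at this
        linarith
      have htri : dR K X (pt K X x l₀ (f i)) (pt K X x l₀ (f (i+1))) ≤ 2 * R + 1 := by
        have t1 := dR_triangle K X hsurj (pt K X x l₀ (f i)) (pt K X x l i)
          (pt K X x l₀ (f (i+1)))
        have t2 := dR_triangle K X hsurj (pt K X x l i) (pt K X x l (i+1))
          (pt K X x l₀ (f (i+1)))
        have s1 : dR K X (pt K X x l₀ (f i)) (pt K X x l i)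
            = dR K X (pt K X x l i) (pt K X x l₀ (f i)) := dR_symm K X hsurj _ _
        linarith
      have hgeo : dR K X (pt K X x l₀ (f i)) (pt K X x l₀ (f (i+1)))
          = |(f (i+1) : ℝ) - (f i : ℝ)| := by
        rcases le_total (f i) (f (i+1)) with hle | hle
        · rw [hg _ _ hle (hf1 (i+1)), abs_of_nonneg]
          have : ((f i : ℕ) : ℝ) ≤ ((f (i+1) : ℕ) : ℝ) := by exact_mod_cast hle
          linarith
        · rw [dR_symm K X hsurj, hg _ _ hle (hf1 i), abs_of_nonpos]
          · ring
          · have : ((f (i+1) : ℕ) : ℝ) ≤ ((f i : ℕ) : ℝ) := by exact_mod_cast hle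
            linarith
      rw [← hgeo]
      exact htri
    set S := {i : ℕ | t ≤ f i} with hS
    have hSn : n ∈ S := by
      simp only [hS, Set.mem_setOf_eq, hf3n n le_rfl]
      exact ht
    have hSne : S.Nonempty := ⟨n, hSn⟩
    set i0 := sInf S with hi0
    have hi0S : i0 ∈ S := Nat.sInf_mem hSne
    have hi0n : i0 ≤ n := Nat.sInf_le hSn
    have hti0 : t ≤ f i0 := hi0S
    refine ⟨i0, hi0n, ?_⟩
    have hkey : dR K X (pt K X x l₀ t) (pt K X x l₀ (f i0)) ≤ 2 * R + 1 := by
      rcases Nat.eq_zero_or_pos i0 with h0 | hposi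
      · have hf00 : f i0 = 0 := by rw [h0]; exact hf30 0 rfl
        have ht0 : t = 0 := by omega
        rw [ht0, hf00, dR_self]
        linarith
      · have hnot : i0 - 1 ∉ S := Nat.notMem_of_lt_sInf (by omega)
        have hprev : f (i0 - 1) < t := by
          by_contra hcc
          push_neg at hcc
          exact hnot hcc
        have hjmp := hjump (i0 - 1) (by omega)
        have he : i0 - 1 + 1 = i0 := by omega
        rw [he] at hjmp
        have habs := abs_le.mp hjmp
        have hdgeo : dR K X (pt K X x l₀ t) (pt K X x l₀ (f i0)) = (f i0 : ℝ) - t := by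
          rw [hg t (f i0) hti0 (hf1 i0)]
        rw [hdgeo]
        have c1 : ((f (i0-1) : ℕ) : ℝ) < (t : ℝ) := by exact_mod_cast hprev
        linarith [habs.2]
    have hlast : dR K X (pt K X x l₀ (f i0)) (pt K X x l i0) ≤ R := by
      have := hf2 i0
      rw [min_eq_left hi0n] at this
      rw [dR_symm K X hsurj]
      exact this
    have := dR_triangle K X hsurj (pt K X x l₀ t) (pt K X x l₀ (f i0)) (pt K X x l i0)
    linarith

end Fg
end QMExt

namespace QMExt
section H
variable {G : Type*} [Group G] (K : Subgroup G) (X : Set G)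

theorem tripod {δ : ℝ} (hδ : 0 ≤ δ) (hX : ∀ x ∈ X, x⁻¹ ∈ X)
    (hsurj : Function.Surjective (theta K X)) (hhyp : HypWith ((K : Set G) ∪ X) δ)
    {half : ℕ} (hhalf : 8 * δ + 5 ≤ (half : ℝ))
    {x y z : G} {l₁ l₂ l₃ : List (RelLetter K X)}
    (h₁ : PathLocGeo K X (2 * half) x l₁) (e₁ : pt K X x l₁ l₁.length = y)
    (h₂ : PathLocGeo K X (2 * half) y l₂) (e₂ : pt K X y l₂ l₂.length = z)
    (h₃ : PathLocGeo K X (2 * half) z l₃) (e₃ : pt K X z l₃ l₃.length = x) :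
    ∃ i₁ ≤ l₁.length, ∃ i₂ ≤ l₂.length, ∃ i₃ ≤ l₃.length,
      dR K X (pt K X x l₁ i₁) (pt K X y l₂ i₂) ≤ 60 * δ + 40 ∧
      dR K X (pt K X y l₂ i₂) (pt K X z l₃ i₃) ≤ 60 * δ + 40 ∧
      dR K X (pt K X x l₁ i₁) (pt K X z l₃ i₃) ≤ 60 * δ + 40 := by
  obtain ⟨γ₁, hγ₁geo, hγ₁end, hγ₁len⟩ := geo_from_to K X hsurj x y
  obtain ⟨γ₂, hγ₂geo, hγ₂end, hγ₂len⟩ := geo_from_to K X hsurj y z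
  obtain ⟨γ₃, hγ₃geo, hγ₃end, hγ₃len⟩ := geo_from_to K X hsurj z x
  set n₁ := γ₁.length with hn₁
  set n₂ := γ₂.length with hn₂
  set n₃ := γ₃.length with hn₃
  -- the tripod parameter at corner x
  set t := ⌊gpr K X y z x⌋₊ with htdef
  have hgpos : 0 ≤ gpr K X y z x := gpr_nonneg K X hsurj y z x
  have htle : (t : ℝ) ≤ gpr K X y z x := Nat.floor_le hgpos
  have htgt : gpr K X y z x < (t : ℝ) + 1 := Nat.lt_floor_add_one _
  have htn₁ : t ≤ n₁ := by
    have h1 := gpr_le_left K X hsurj y z x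
    have : (t : ℝ) ≤ (n₁ : ℝ) := by rw [hγ₁len]; linarith
    exact_mod_cast this
  have htn₃ : t ≤ n₃ := by
    have h1 := gpr_le_left K X hsurj z y x
    have h2 : gpr K X y z x = gpr K X z y x := gpr_symm K X hsurj y z x
    have h3 : dR K X x z = (n₃ : ℝ) := by
      rw [dR_symm K X hsurj, ← hγ₃len]
    have : (t : ℝ) ≤ (n₃ : ℝ) := by rw [← h3]; linarith
    exact_mod_cast this
  -- m₁ on γ₁, m₃ on the reverse of γ₃
  set m₁ := pt K X x γ₁ t with hm₁
  have hγ₃rev : PathGeo K X x (invWord K X γ₃) := by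
    have := hγ₃geo.rev K X hsurj
    rw [hγ₃end] at this
    exact this
  have hγ₃revend : pt K X x (invWord K X γ₃) (invWord K X γ₃).length = z := by
    rw [invWord_length, ← hγ₃end, pt_invWord' K X le_rfl, Nat.sub_self, pt_zero]
  set m₃ := pt K X x (invWord K X γ₃) t with hm₃
  have hm₃Q : m₃ = pt K X z γ₃ (n₃ - t) := by
    rw [hm₃, ← hγ₃end, pt_invWord' K X htn₃]
  have hcorx := corner K X hδ hX hsurj hhyp hγ₁geo hγ₁end hγ₃rev hγ₃revend
    (t := t) htn₁ (by rw [invWord_length]; exact htn₃) (by linarith)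
  -- corner at y
  have hγ₁rev : PathGeo K X y (invWord K X γ₁) := by
    have := hγ₁geo.rev K X hsurj
    rw [hγ₁end] at this
    exact this
  have hγ₁revend : pt K X y (invWord K X γ₁) (invWord K X γ₁).length = x := by
    rw [invWord_length, ← hγ₁end, pt_invWord' K X le_rfl, Nat.sub_self, pt_zero]
  set s := n₁ - t with hsdef
  set s' := min s n₂ with hs'def
  have hs'₂ : s' ≤ n₂ := min_le_right _ _
  have hs's : s' ≤ s := min_le_left _ _
  have hsn₁ : s ≤ n₁ := by omega
  have hsR : (s : ℝ) = (n₁ : ℝ) - t := by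
    rw [hsdef]; push_cast [Nat.cast_sub htn₁]; ring
  have hadd := gpr_add K X hsurj x y z
  -- s ≤ gpr x z y + 1
  have hsle : (s : ℝ) ≤ gpr K X x z y + 1 := by
    have hadd2 : gpr K X y z x + gpr K X x z y = (n₁ : ℝ) := by rw [hγ₁len]; exact hadd
    rw [hsR]
    linarith
  have hs'le : (s' : ℝ) ≤ gpr K X x z y + 1 := by
    have : (s' : ℝ) ≤ (s : ℝ) := by exact_mod_cast hs's
    linarith
  -- s - s' ≤ 1
  have hss'1 : (s : ℝ) - s' ≤ 1 := by
    rcases min_cases s n₂ with ⟨he, _⟩ | ⟨he, hlt⟩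
    · rw [hs'def, he]; simp
    · rw [hs'def, he]
      have h1 : gpr K X x z y ≤ dR K X y z := by
        have := gpr_le_left K X hsurj z x y
        have h2 : gpr K X x z y = gpr K X z x y := gpr_symm K X hsurj x z y
        linarith
      linarith [hγ₂len, hsle]
  have hcory := corner K X hδ hX hsurj hhyp hγ₁rev hγ₁revend hγ₂geo hγ₂end
    (t := s') (by rw [invWord_length]; omega) hs'₂ (by linarith)
  set m₂ := pt K X y γ₂ s' with hm₂
  have hqpt : pt K X y (invWord K X γ₁) s' = pt K X x γ₁ (n₁ - s') := by
    rw [← hγ₁end, pt_invWord' K X (by omega)]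
  rw [hqpt] at hcory
  have hqm₁ : dR K X (pt K X x γ₁ (n₁ - s')) m₁ = (s : ℝ) - s' := by
    have h1 : t ≤ n₁ - s' := by omega
    have := hγ₁geo t (n₁ - s') h1 (by omega)
    rw [dR_symm K X hsurj, hm₁, this]
    have c1 : ((n₁ - s' : ℕ) : ℝ) = (n₁ : ℝ) - s' := by
      push_cast [Nat.cast_sub (show s' ≤ n₁ by omega)]; ring
    rw [c1, hsR]
    ring
  have hm₁m₂ : dR K X m₁ m₂ ≤ 4 * δ + 3 := by
    have htri := dR_triangle K X hsurj m₁ (pt K X x γ₁ (n₁ - s')) m₂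
    have hsym : dR K X m₁ (pt K X x γ₁ (n₁ - s'))
        = dR K X (pt K X x γ₁ (n₁ - s')) m₁ := dR_symm K X hsurj _ _
    rw [hsym, hqm₁] at htri
    linarith
  have hm₁m₃ : dR K X m₁ m₃ ≤ 4 * δ + 2 := hcorx
  have hm₂m₃ : dR K X m₂ m₃ ≤ 8 * δ + 5 := by
    have htri := dR_triangle K X hsurj m₂ m₁ m₃
    have hsym : dR K X m₂ m₁ = dR K X m₁ m₂ := dR_symm K X hsurj _ _
    linarith
  -- now project to the local geodesics
  have hc₁ := geo_near_locgeo K X hδ hX hsurj hhyp hhalf h₁ hγ₁geo (by rw [hγ₁end, e₁])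
  have hc₂ := geo_near_locgeo K X hδ hX hsurj hhyp hhalf h₂ hγ₂geo (by rw [hγ₂end, e₂])
  have hc₃ := geo_near_locgeo K X hδ hX hsurj hhyp hhalf h₃ hγ₃geo (by rw [hγ₃end, e₃])
  obtain ⟨i₁, hi₁, hd₁⟩ := hc₁ t htn₁
  obtain ⟨i₂, hi₂, hd₂⟩ := hc₂ s' hs'₂
  obtain ⟨i₃, hi₃, hd₃⟩ := hc₃ (n₃ - t) (by omega)
  rw [← hm₁] at hd₁
  rw [← hm₂] at hd₂
  rw [← hm₃Q] at hd₃
  refine ⟨i₁, hi₁, i₂, hi₂, i₃, hi₃, ?_, ?_, ?_⟩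
  · have t1 := dR_triangle K X hsurj (pt K X x l₁ i₁) m₁ (pt K X y l₂ i₂)
    have t2 := dR_triangle K X hsurj m₁ m₂ (pt K X y l₂ i₂)
    have s1 : dR K X (pt K X x l₁ i₁) m₁ = dR K X m₁ (pt K X x l₁ i₁) := dR_symm K X hsurj _ _
    linarith
  · have t1 := dR_triangle K X hsurj (pt K X y l₂ i₂) m₂ (pt K X z l₃ i₃)
    have t2 := dR_triangle K X hsurj m₂ m₃ (pt K X z l₃ i₃)
    have s1 : dR K X (pt K X y l₂ i₂) m₂ = dR K X m₂ (pt K X y l₂ i₂) := dR_symm K X hsurj _ _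
    linarith
  · have t1 := dR_triangle K X hsurj (pt K X x l₁ i₁) m₁ (pt K X z l₃ i₃)
    have t2 := dR_triangle K X hsurj m₁ m₃ (pt K X z l₃ i₃)
    have s1 : dR K X (pt K X x l₁ i₁) m₁ = dR K X m₁ (pt K X x l₁ i₁) := dR_symm K X hsurj _ _
    linarith

end H
end QMExt

namespace QMExt
section I
variable {H : Type*} [Group H]

theorem qm_le_defect {φ : H → ℝ} (hqm : IsQM φ) (a b : H) :
    |φ a + φ b - φ (a * b)| ≤ qmDefect φ := by
  obtain ⟨D, hD⟩ := hqm
  exact le_csSup ⟨D, fun r ⟨g, h, hr⟩ => hr ▸ hD g h⟩ ⟨a, b, rfl⟩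

theorem antisym_one {φ : H → ℝ} (hanti : IsAntisym φ) : φ 1 = 0 := by
  have := hanti 1
  rw [inv_one] at this
  linarith

theorem qmDefect_nonneg {φ : H → ℝ} (hqm : IsQM φ) (hanti : IsAntisym φ) :
    0 ≤ qmDefect φ := by
  have h := qm_le_defect hqm 1 1
  rw [one_mul, antisym_one hanti] at h
  simp at h
  linarith [abs_nonneg (φ (1:H) + φ 1 - φ 1), h]

/-- replace a middle factor -/
theorem qm_mid {φ : H → ℝ} (hqm : IsQM φ) (p m q : H) :
    |φ (p * m * q) - φ (p * q) - φ m| ≤ 3 * qmDefect φ := by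
  have h1 := qm_le_defect hqm p (m * q)
  have h2 := qm_le_defect hqm m q
  have h3 := qm_le_defect hqm p q
  have e : p * (m * q) = p * m * q := by group
  rw [e] at h1
  have a1 := abs_le.mp h1
  have a2 := abs_le.mp h2
  have a3 := abs_le.mp h3
  rw [abs_le]
  constructor <;> [skip; skip] <;> cases a1 <;> cases a2 <;> cases a3 <;> linarith

end I

section J
variable {G : Type*} [Group G] (K : Subgroup G) (X : Set G)

/-- `φ̃ = φ ∘ η` -/
noncomputable def phit (φ : ↥K → ℝ) (a : ↥K ∗ FreeGroup ↥X) : ℝ := φ (eta K X a)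

/-- truncated word length minus one -/
noncomputable def rho (a : ↥K ∗ FreeGroup ↥X) : ℕ := wordLen K X a - 1

/-- the weighted functional -/
noncomputable def Tf (φ : ↥K → ℝ) (C : ℝ) (a : ↥K ∗ FreeGroup ↥X) : ℝ :=
  phit K X φ a + C * (rho K X a : ℝ)

/-- the extension candidate -/
noncomputable def PhiF (φ : ↥K → ℝ) (C : ℝ) (g : G) : ℝ :=
  sInf {r : ℝ | ∃ a : ↥K ∗ FreeGroup ↥X, theta K X a = g ∧ r = Tf K X φ C a}

variable {φ : ↥K → ℝ} {C₀ C : ℝ}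

theorem phit_mul_ge (hqm : IsQM φ) (a b : ↥K ∗ FreeGroup ↥X) :
    phit K X φ (a * b) ≥ phit K X φ a + phit K X φ b - qmDefect φ := by
  have := qm_le_defect hqm (eta K X a) (eta K X b)
  have ha := abs_le.mp this
  unfold phit
  rw [map_mul]
  linarith [ha.1]

theorem phit_mul_le (hqm : IsQM φ) (a b : ↥K ∗ FreeGroup ↥X) :
    phit K X φ (a * b) ≤ phit K X φ a + phit K X φ b + qmDefect φ := by
  have := qm_le_defect hqm (eta K X a) (eta K X b)
  have ha := abs_le.mp this
  unfold phit
  rw [map_mul]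
  linarith [ha.2]

theorem phit_inv (hanti : IsAntisym φ) (a : ↥K ∗ FreeGroup ↥X) :
    phit K X φ a⁻¹ = - phit K X φ a := by
  unfold phit
  rw [map_inv]
  exact hanti _

/-- control, unpacked -/
theorem ctrl_bound (hctrl : LinearlyControlled K X φ C₀) (a : ↥K ∗ FreeGroup ↥X)
    (ha : theta K X a = 1) : |phit K X φ a| ≤ C₀ * (wordLen K X a : ℝ) + C₀ := by
  have hker : a ∈ (theta K X).ker := by
    rw [MonoidHom.mem_ker]
    exact ha
  exact hctrl (wordLen K X a) a hker le_rfl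

/-- comparison of `φ̃` along a fiber -/
theorem phit_fiber (hqm : IsQM φ) (hctrl : LinearlyControlled K X φ C₀)
    (a b : ↥K ∗ FreeGroup ↥X) (hab : theta K X a = theta K X b) :
    phit K X φ a ≥ phit K X φ b - qmDefect φ
      - (C₀ * ((wordLen K X a : ℝ) + (wordLen K X b : ℝ)) + C₀) := by
  set n := a * b⁻¹ with hn
  have hn1 : theta K X n = 1 := by
    rw [hn, map_mul, map_inv, hab]
    group
  have hlen : (wordLen K X n : ℝ) ≤ (wordLen K X a : ℝ) + (wordLen K X b : ℝ) := by
    have h1 : wordLen K X n ≤ wordLen K X a + wordLen K X b⁻¹ := wordLen_mul_le K X a b⁻¹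
    have h2 := wordLen_inv K X b
    have : wordLen K X n ≤ wordLen K X a + wordLen K X b := by omega
    exact_mod_cast this
  have hc := ctrl_bound K X hctrl n hn1
  have hc' : phit K X φ n ≥ - (C₀ * ((wordLen K X a : ℝ) + (wordLen K X b : ℝ)) + C₀) := by
    have := abs_le.mp hc
    nlinarith [this.1, hlen, le_abs_self (phit K X φ n), neg_abs_le (phit K X φ n)]
  have hsplit : phit K X φ a ≥ phit K X φ n + phit K X φ b - qmDefect φ := by
    have := phit_mul_ge K X hqm n b
    have he : n * b = a := by rw [hn]; group
    rw [he] at this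
    linarith
  linarith

theorem rho_le_wordLen (a : ↥K ∗ FreeGroup ↥X) : (rho K X a : ℝ) ≤ (wordLen K X a : ℝ) := by
  have : rho K X a ≤ wordLen K X a := by unfold rho; omega
  exact_mod_cast this

theorem wordLen_le_rho (a : ↥K ∗ FreeGroup ↥X) :
    (wordLen K X a : ℝ) ≤ (rho K X a : ℝ) + 1 := by
  have : wordLen K X a ≤ rho K X a + 1 := by unfold rho; omega
  exact_mod_cast this

theorem rho_inv (a : ↥K ∗ FreeGroup ↥X) : rho K X a⁻¹ = rho K X a := by
  unfold rho
  rw [wordLen_inv]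

theorem rho_mul_le (a b : ↥K ∗ FreeGroup ↥X) :
    (rho K X (a * b) : ℝ) ≤ (rho K X a : ℝ) + (rho K X b : ℝ) + 1 := by
  have h := wordLen_mul_le K X a b
  have : rho K X (a * b) ≤ rho K X a + rho K X b + 1 := by unfold rho; omega
  exact_mod_cast this

end J
end QMExt

namespace QMExt
section L
variable {G : Type*} [Group G] (K : Subgroup G) (X : Set G)
variable {φ : ↥K → ℝ} {C₀ C : ℝ}

theorem PhiF_nonempty (hsurj : Function.Surjective (theta K X)) (g : G) :
    {r : ℝ | ∃ a : ↥K ∗ FreeGroup ↥X, theta K X a = g ∧ r = Tf K X φ C a}.Nonempty := by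
  obtain ⟨a, ha⟩ := hsurj g
  exact ⟨Tf K X φ C a, a, ha, rfl⟩

theorem Tf_lower (hqm : IsQM φ) (hctrl : LinearlyControlled K X φ C₀)
    (hC1 : C₀ ≤ C) {g : G} (a₀ : ↥K ∗ FreeGroup ↥X) (ha₀ : theta K X a₀ = g)
    (a : ↥K ∗ FreeGroup ↥X) (ha : theta K X a = g) :
    phit K X φ a₀ - qmDefect φ - C₀ * (wordLen K X a₀ : ℝ) - 2 * C₀ ≤ Tf K X φ C a := by
  have hf := phit_fiber K X hqm hctrl a a₀ (by rw [ha, ha₀])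
  have h1 := wordLen_le_rho K X a
  have h2 : (0:ℝ) ≤ (rho K X a : ℝ) := Nat.cast_nonneg _
  have hC₀0 : 0 ≤ C₀ := by
    by_contra hneg
    push_neg at hneg
    have := ctrl_bound K X hctrl 1 (by simp)
    rw [wordLen_one] at this
    simp at this
    have := abs_nonneg (phit K X φ (1 : ↥K ∗ FreeGroup ↥X))
    linarith
  unfold Tf
  nlinarith [hf, h1, h2, hC1]

theorem PhiF_bddBelow (hqm : IsQM φ) (hctrl : LinearlyControlled K X φ C₀)
    (hC1 : C₀ ≤ C) (hsurj : Function.Surjective (theta K X)) (g : G) :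
    BddBelow {r : ℝ | ∃ a : ↥K ∗ FreeGroup ↥X, theta K X a = g ∧ r = Tf K X φ C a} := by
  obtain ⟨a₀, ha₀⟩ := hsurj g
  refine ⟨phit K X φ a₀ - qmDefect φ - C₀ * (wordLen K X a₀ : ℝ) - 2 * C₀, ?_⟩
  rintro r ⟨a, ha, rfl⟩
  exact Tf_lower K X hqm hctrl hC1 a₀ ha₀ a ha

theorem PhiF_le (hqm : IsQM φ) (hctrl : LinearlyControlled K X φ C₀)
    (hC1 : C₀ ≤ C) (hsurj : Function.Surjective (theta K X))
    {g : G} {a : ↥K ∗ FreeGroup ↥X} (ha : theta K X a = g) :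
    PhiF K X φ C g ≤ Tf K X φ C a :=
  csInf_le (PhiF_bddBelow K X hqm hctrl hC1 hsurj g) ⟨a, ha, rfl⟩

theorem PhiF_near (hsurj : Function.Surjective (theta K X)) (g : G) {ε : ℝ} (hε : 0 < ε) :
    ∃ a : ↥K ∗ FreeGroup ↥X, theta K X a = g ∧ Tf K X φ C a ≤ PhiF K X φ C g + ε := by
  have hlt : PhiF K X φ C g < PhiF K X φ C g + ε := by linarith
  obtain ⟨r, ⟨a, ha, rfl⟩, hr⟩ := exists_lt_of_csInf_lt (PhiF_nonempty K X hsurj g) hlt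
  exact ⟨a, ha, le_of_lt hr⟩

theorem PhiF_ge (hsurj : Function.Surjective (theta K X)) {g : G} {B : ℝ}
    (h : ∀ a : ↥K ∗ FreeGroup ↥X, theta K X a = g → B ≤ Tf K X φ C a) :
    B ≤ PhiF K X φ C g :=
  le_csInf (PhiF_nonempty K X hsurj g) (fun r ⟨a, ha, hr⟩ => hr ▸ h a ha)

theorem PhiF_mul (hqm : IsQM φ) (hctrl : LinearlyControlled K X φ C₀)
    (hC1 : C₀ ≤ C) (hC0 : 0 ≤ C) (hC₀ : 0 < C₀) (hsurj : Function.Surjective (theta K X))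
    (g h : G) :
    PhiF K X φ C (g * h) ≤ PhiF K X φ C g + PhiF K X φ C h + (qmDefect φ + C + 2 * C₀) := by
  obtain ⟨a, ha, hTa⟩ := PhiF_near K X hsurj g (C := C) hC₀
  obtain ⟨b, hb, hTb⟩ := PhiF_near K X hsurj h (C := C) hC₀
  have hab : theta K X (a * b) = g * h := by rw [map_mul, ha, hb]
  have h1 := PhiF_le K X hqm hctrl hC1 hsurj hab
  have h2 : Tf K X φ C (a * b) ≤ Tf K X φ C a + Tf K X φ C b + (qmDefect φ + C) := by
    unfold Tf
    have h3 := phit_mul_le K X hqm a b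
    have h4 := rho_mul_le K X a b
    nlinarith [h3, h4, hC0]
  linarith

theorem rho_inl (k : ↥K) : rho K X (Coprod.inl k : ↥K ∗ FreeGroup ↥X) = 0 := by
  unfold rho
  have := wordLen_inl_le K X k
  omega

theorem PhiF_le_phi (hqm : IsQM φ) (hctrl : LinearlyControlled K X φ C₀)
    (hC1 : C₀ ≤ C) (hsurj : Function.Surjective (theta K X)) (k : ↥K) :
    PhiF K X φ C ((k : G)) ≤ φ k := by
  have h := PhiF_le K X hqm hctrl hC1 hsurj (theta_inl K X k)
  have : Tf K X φ C (Coprod.inl k) = φ k := by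
    unfold Tf phit
    rw [eta_inl, rho_inl]
    simp
  rw [this] at h
  exact h

theorem phi_le_PhiF (hqm : IsQM φ) (hctrl : LinearlyControlled K X φ C₀)
    (hC1 : C₀ ≤ C) (hsurj : Function.Surjective (theta K X)) (k : ↥K) :
    φ k - (qmDefect φ + 3 * C₀) ≤ PhiF K X φ C ((k : G)) := by
  refine PhiF_ge K X hsurj ?_
  intro a ha
  have hfib : theta K X a = theta K X (Coprod.inl k) := by rw [ha, theta_inl]
  have hf := phit_fiber K X hqm hctrl a (Coprod.inl k) hfib
  have hwk : (wordLen K X (Coprod.inl k : ↥K ∗ FreeGroup ↥X) : ℝ) ≤ 1 := by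
    exact_mod_cast wordLen_inl_le K X k
  have hek : phit K X φ (Coprod.inl k : ↥K ∗ FreeGroup ↥X) = φ k := by
    unfold phit; rw [eta_inl]
  have h1 := wordLen_le_rho K X a
  have h2 : (0:ℝ) ≤ (rho K X a : ℝ) := Nat.cast_nonneg _
  have hC₀0 : 0 ≤ C₀ := by
    by_contra hneg
    push_neg at hneg
    have := ctrl_bound K X hctrl 1 (by simp)
    rw [wordLen_one] at this
    simp at this
    have := abs_nonneg (phit K X φ (1 : ↥K ∗ FreeGroup ↥X))
    linarith
  unfold Tf
  nlinarith [hf, h1, h2, hC1, hek, hwk]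

/-- symmetric sum bound for nearby points -/
theorem sigma_le (hqm : IsQM φ) (hanti : IsAntisym φ) (hctrl : LinearlyControlled K X φ C₀)
    (hC1 : C₀ ≤ C) (hC0 : 0 ≤ C) (hsurj : Function.Surjective (theta K X)) (p q : G) :
    PhiF K X φ C (p⁻¹ * q) + PhiF K X φ C (q⁻¹ * p) ≤ 2 * C * dR K X p q := by
  obtain ⟨l, hl, hlen⟩ := exists_geo_word K X hsurj (p⁻¹ * q)
  set a := evalWord K X l with hadef
  have ha : theta K X a = p⁻¹ * q := hl
  have hainv : theta K X a⁻¹ = q⁻¹ * p := by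
    rw [map_inv, ha]
    group
  have h1 := PhiF_le K X hqm hctrl hC1 hsurj ha
  have h2 := PhiF_le K X hqm hctrl hC1 hsurj hainv
  have hsum : Tf K X φ C a + Tf K X φ C a⁻¹ = 2 * C * (rho K X a : ℝ) := by
    unfold Tf
    rw [phit_inv K X hanti, rho_inv]
    ring
  have hrle : (rho K X a : ℝ) ≤ dR K X p q := by
    have hw : wordLen K X a ≤ l.length := wordLen_le K X a l rfl
    have : rho K X a ≤ dN K X (p⁻¹ * q) := by
      unfold rho
      omega
    calc (rho K X a : ℝ) ≤ (dN K X (p⁻¹ * q) : ℝ) := by exact_mod_cast this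
      _ = dR K X p q := rfl
  nlinarith [h1, h2, hsum, hrle, hC0]

/-- splitting along a minimal word -/
theorem Tf_split (hqm : IsQM φ) (hC0 : 0 ≤ C) {a : ↥K ∗ FreeGroup ↥X}
    {l : List (RelLetter K X)} (hl : evalWord K X l = a) (hlen : l.length = wordLen K X a)
    (i : ℕ) (hi : i ≤ l.length) :
    Tf K X φ C (evalWord K X (l.take i)) + Tf K X φ C (evalWord K X (l.drop i)) - qmDefect φ
      ≤ Tf K X φ C a := by
  have hsplit : a = evalWord K X (l.take i) * evalWord K X (l.drop i) := by
    rw [← hl, ← evalWord_append, List.take_append_drop]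
  have hphi : phit K X φ (evalWord K X (l.take i)) + phit K X φ (evalWord K X (l.drop i))
      - qmDefect φ ≤ phit K X φ a := by
    rw [hsplit]
    linarith [phit_mul_ge K X hqm (evalWord K X (l.take i)) (evalWord K X (l.drop i))]
  have hrho : (rho K X (evalWord K X (l.take i)) : ℝ) + (rho K X (evalWord K X (l.drop i)) : ℝ)
      ≤ (rho K X a : ℝ) := by
    have h1 : wordLen K X (evalWord K X (l.take i)) ≤ i := by
      have := wordLen_le K X _ (l.take i) rfl
      have hlt : (l.take i).length = i := by
        rw [List.length_take]
        omega
      omega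
    have h2 : wordLen K X (evalWord K X (l.drop i)) ≤ l.length - i := by
      have := wordLen_le K X _ (l.drop i) rfl
      have hld : (l.drop i).length = l.length - i := by rw [List.length_drop]
      omega
    have h3 : rho K X (evalWord K X (l.take i)) + rho K X (evalWord K X (l.drop i))
        ≤ rho K X a := by
      unfold rho
      omega
    exact_mod_cast h3
  unfold Tf
  nlinarith [hphi, hrho, hC0]

end L
end QMExt

namespace QMExt
section M
variable {G : Type*} [Group G] (K : Subgroup G) (X : Set G)
variable {φ : ↥K → ℝ} {C₀ C : ℝ}

theorem exists_taut (hqm : IsQM φ) (hanti : IsAntisym φ)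
    (hctrl : LinearlyControlled K X φ C₀) (hsurj : Function.Surjective (theta K X))
    (hC₀ : 0 < C₀) {kk : ℕ}
    (hCbig : 3 * qmDefect φ + C₀ * (2 * (kk:ℝ)) + 2 * C₀ ≤ C) (g : G) :
    ∃ (a : ↥K ∗ FreeGroup ↥X) (l : List (RelLetter K X)), theta K X a = g ∧
      evalWord K X l = a ∧ l.length = wordLen K X a ∧
      Tf K X φ C a ≤ PhiF K X φ C g + C₀ ∧ ∀ x : G, PathLocGeo K X kk x l := by
  have hC1 : C₀ ≤ C := by
    have h1 : 0 ≤ qmDefect φ := qmDefect_nonneg hqm hanti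
    have h2 : (0:ℝ) ≤ (kk:ℝ) := Nat.cast_nonneg _
    nlinarith
  have hC0 : 0 ≤ C := by linarith
  set S := {n : ℕ | ∃ a : ↥K ∗ FreeGroup ↥X, theta K X a = g ∧
      Tf K X φ C a ≤ PhiF K X φ C g + C₀ ∧ wordLen K X a = n} with hS
  have hSne : S.Nonempty := by
    obtain ⟨a, ha, hTa⟩ := PhiF_near K X hsurj g (C := C) hC₀
    exact ⟨wordLen K X a, a, ha, hTa, rfl⟩
  obtain ⟨a, hag, hTa, hlen⟩ := Nat.sInf_mem hSne
  obtain ⟨l, hla, hll⟩ := exists_min_word K X a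
  refine ⟨a, l, hag, hla, hll, hTa, ?_⟩
  intro x i j hij hj hjk
  -- local geodesic property
  set sub := (l.drop i).take (j - i) with hsubdef
  have hsublen : sub.length = j - i := by
    rw [hsubdef]
    simp [List.length_take, List.length_drop]
    omega
  have hdd : dR K X (pt K X x l i) (pt K X x l j)
      = (dN K X (theta K X (evalWord K X sub)) : ℝ) := by
    unfold dR
    rw [pt_sub K X hij]
  have hub : dN K X (theta K X (evalWord K X sub)) ≤ j - i := by
    have := dN_le K X _ sub rfl
    omega
  have heq : dN K X (theta K X (evalWord K X sub)) = j - i := by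
    by_contra hne
    have hlt : dN K X (theta K X (evalWord K X sub)) < j - i := by omega
    -- replacement word
    obtain ⟨q', hq', hq'len⟩ := exists_geo_word K X hsurj (theta K X (evalWord K X sub))
    set l' := l.take i ++ q' ++ l.drop j with hl'def
    set a' := evalWord K X l' with ha'def
    have ha'eq : a' = evalWord K X (l.take i) * evalWord K X q' * evalWord K X (l.drop j) := by
      rw [ha'def, hl'def, evalWord_append, evalWord_append]
    have haeq : a = evalWord K X (l.take i) * evalWord K X sub * evalWord K X (l.drop j) := by
      rw [← hla, evalWord_take_drop K X l j, evalWord_take_mid K X hij l]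
    have hth : theta K X a' = g := by
      rw [ha'eq, map_mul, map_mul, hq']
      rw [← hag, haeq, map_mul, map_mul]
    have hwl' : wordLen K X a' ≤ i + (dN K X (theta K X (evalWord K X sub))) + (l.length - j) := by
      have := wordLen_le K X a' l' rfl
      have hlenl' : l'.length = i + q'.length + (l.length - j) := by
        rw [hl'def]
        simp [List.length_append, List.length_take, List.length_drop]
        omega
      omega
    have hwla : wordLen K X a = l.length := hll.symm
    have hwl'lt : wordLen K X a' < wordLen K X a := by omega
    -- the small relation
    set r := evalWord K X sub * (evalWord K X q')⁻¹ with hrdef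
    have hrth : theta K X r = 1 := by
      rw [hrdef, map_mul, map_inv, hq']
      group
    have hrlen : (wordLen K X r : ℝ) ≤ 2 * (kk : ℝ) := by
      have h1 : wordLen K X r ≤ wordLen K X (evalWord K X sub)
          + wordLen K X (evalWord K X q')⁻¹ := wordLen_mul_le K X _ _
      have h2 : wordLen K X (evalWord K X q')⁻¹ = wordLen K X (evalWord K X q') :=
        wordLen_inv K X _
      have h3 : wordLen K X (evalWord K X sub) ≤ j - i := by
        have := wordLen_le K X _ sub rfl
        omega
      have h4 : wordLen K X (evalWord K X q') ≤ q'.length := wordLen_le K X _ q' rfl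
      have : wordLen K X r ≤ 2 * kk := by omega
      exact_mod_cast this
    have hrphi : |phit K X φ r| ≤ C₀ * (2 * (kk:ℝ)) + C₀ := by
      have := ctrl_bound K X hctrl r hrth
      have hC₀0 : (0:ℝ) ≤ C₀ := le_of_lt hC₀
      nlinarith [this, hrlen]
    -- compare φ̃ values
    have hmid : |phit K X φ a - phit K X φ a' - phit K X φ r| ≤ 3 * qmDefect φ := by
      have heta : eta K X a = eta K X (evalWord K X (l.take i)) * eta K X r
          * (eta K X (evalWord K X q') * eta K X (evalWord K X (l.drop j))) := by
        rw [haeq, map_mul, map_mul]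
        have : eta K X (evalWord K X sub) = eta K X r * eta K X (evalWord K X q') := by
          rw [hrdef, map_mul, map_inv]
          group
        rw [this]
        group
      have heta' : eta K X a' = eta K X (evalWord K X (l.take i))
          * (eta K X (evalWord K X q') * eta K X (evalWord K X (l.drop j))) := by
        rw [ha'eq, map_mul, map_mul]
        group
      have hqmid := qm_mid hqm (eta K X (evalWord K X (l.take i))) (eta K X r)
        (eta K X (evalWord K X q') * eta K X (evalWord K X (l.drop j)))
      unfold phit
      rw [heta, heta']
      exact hqmid
    -- case on the length
    rcases Nat.lt_or_ge l.length 2 with hsmall | hbig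
    · -- l.length = 1 (it is ≥ 1 since j - i ≥ 1)
      have hji1 : 1 ≤ j - i := by omega
      have hlen1 : l.length = 1 := by omega
      have hi0 : i = 0 := by omega
      have hj1 : j = 1 := by omega
      obtain ⟨c, hc⟩ := List.length_eq_one_iff.mp hlen1
      -- the single letter is θ-trivial
      have hsubl : sub = l := by
        rw [hsubdef, hi0, hj1, hc]
        rfl
      have hθa : theta K X a = 1 := by
        have h1 : dN K X (theta K X (evalWord K X sub)) = 0 := by omega
        have := dN_eq_zero K X hsurj _ h1
        rw [hsubl, hla] at this
        exact this
      -- the letter cannot be a K-letter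
      have hphia : phit K X φ a = 0 := by
        rcases c with k | ⟨xx, b⟩
        · -- a = inl k with θ a = 1 : then k = 1 and a = 1, contradicting wordLen a = 1
          exfalso
          have hak : a = Coprod.inl k := by
            rw [← hla, hc]
            show evalLetter K X (Sum.inl k) * 1 = _
            rw [mul_one]; rfl
          have : (k : G) = 1 := by
            rw [hak, theta_inl] at hθa
            exact hθa
          have hk1 : k = 1 := by
            ext
            exact this
          rw [hak, hk1] at hll
          rw [hc] at hll
          simp only [List.length_singleton] at hll
          have h0 : wordLen K X (Coprod.inl (1:↥K) : ↥K ∗ FreeGroup ↥X) = 0 := by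
            rw [map_one]
            exact wordLen_one K X
          omega
        · -- an X-letter : φ̃ a = 0
          have hax : a = evalLetter K X (Sum.inr (xx, b)) := by
            rw [← hla, hc]
            show evalLetter K X (Sum.inr (xx, b)) * 1 = _
            rw [mul_one]
          rcases b with _ | _
          · rw [hax]
            unfold phit
            show φ (eta K X ((Coprod.inr (FreeGroup.of xx))⁻¹)) = 0
            rw [map_inv, eta_inr, inv_one]
            exact antisym_one hanti
          · rw [hax]
            unfold phit
            show φ (eta K X (Coprod.inr (FreeGroup.of xx))) = 0
            rw [eta_inr]
            exact antisym_one hanti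
      -- then 1 ∈ S with smaller word length
      have h1S : 0 ∈ S := by
        refine ⟨1, ?_, ?_, wordLen_one K X⟩
        · rw [map_one, ← hθa, hag]
        · have hT1 : Tf K X φ C (1 : ↥K ∗ FreeGroup ↥X) = 0 := by
            unfold Tf phit rho
            rw [map_one, antisym_one hanti, wordLen_one]
            simp
          have hTa0 : Tf K X φ C a = 0 := by
            unfold Tf
            rw [hphia]
            have : rho K X a = 0 := by
              unfold rho
              omega
            rw [this]
            simp
          rw [hT1, ← hTa0]
          exact hTa
      have := Nat.sInf_le h1S
      omega
    · -- general case : the replacement strictly decreases the length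
      have hrho' : (rho K X a' : ℝ) ≤ (rho K X a : ℝ) - 1 := by
        have h1 : rho K X a' + 1 ≤ rho K X a := by
          unfold rho
          omega
        have h2 : (rho K X a' + 1 : ℕ) ≤ rho K X a := h1
        have : ((rho K X a' + 1 : ℕ) : ℝ) ≤ (rho K X a : ℝ) := by exact_mod_cast h2
        push_cast at this
        linarith
      have hTa' : Tf K X φ C a' ≤ Tf K X φ C a := by
        unfold Tf
        have habs := abs_le.mp hmid
        have habs2 := abs_le.mp hrphi
        nlinarith [habs.1, habs.2, habs2.1, habs2.2, hrho', hC0]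
      have ha'S : wordLen K X a' ∈ S := ⟨a', hth, le_trans hTa' hTa, rfl⟩
      have := Nat.sInf_le ha'S
      omega
  rw [hdd, heq]
  push_cast [Nat.cast_sub hij]
  ring

end M
end QMExt

namespace QMExt
section N
variable {G : Type*} [Group G] (K : Subgroup G) (X : Set G)
variable {φ : ↥K → ℝ} {C₀ C : ℝ}

/-- cyclic sum -/
noncomputable def cyc (φ : ↥K → ℝ) (C : ℝ) (x y z : G) : ℝ :=
  PhiF K X φ C (x⁻¹ * y) + PhiF K X φ C (y⁻¹ * z) + PhiF K X φ C (z⁻¹ * x)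

set_option maxHeartbeats 2000000 in
theorem main_cyc {δ : ℝ} (hδ : 0 ≤ δ) (hX : ∀ x ∈ X, x⁻¹ ∈ X)
    (hsurj : Function.Surjective (theta K X)) (hhyp : HypWith ((K : Set G) ∪ X) δ)
    (hqm : IsQM φ) (hanti : IsAntisym φ) (hctrl : LinearlyControlled K X φ C₀)
    (hC₀ : 0 < C₀) {half : ℕ} (hhalf : 8 * δ + 5 ≤ (half : ℝ))
    (hCbig : 3 * qmDefect φ + C₀ * (2 * ((2 * half : ℕ) : ℝ)) + 2 * C₀ ≤ C)
    (x y z : G) :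
    cyc K X φ C z y x ≤ cyc K X φ C x y z +
      (7 * (qmDefect φ + C + 2 * C₀) + 4 * C * (60 * δ + 40)
        + 3 * qmDefect φ + 3 * C₀) := by
  have hC1 : C₀ ≤ C := by
    have h1 : 0 ≤ qmDefect φ := qmDefect_nonneg hqm hanti
    have h2 : (0:ℝ) ≤ ((2*half : ℕ):ℝ) := Nat.cast_nonneg _
    nlinarith
  have hC0 : 0 ≤ C := by linarith
  set Dq := qmDefect φ with hDq
  set D₁ := Dq + C + 2 * C₀ with hD₁
  have hmul : ∀ g h : G, PhiF K X φ C (g * h) ≤ PhiF K X φ C g + PhiF K X φ C h + D₁ :=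
    fun g h => PhiF_mul K X hqm hctrl hC1 hC0 hC₀ hsurj g h
  -- taut words for the three sides
  obtain ⟨a₁, l₁, ha₁, hl₁, hlen₁, hT₁, hloc₁⟩ :=
    exists_taut K X hqm hanti hctrl hsurj hC₀ (kk := 2 * half) hCbig (x⁻¹ * y)
  obtain ⟨a₂, l₂, ha₂, hl₂, hlen₂, hT₂, hloc₂⟩ :=
    exists_taut K X hqm hanti hctrl hsurj hC₀ (kk := 2 * half) hCbig (y⁻¹ * z)
  obtain ⟨a₃, l₃, ha₃, hl₃, hlen₃, hT₃, hloc₃⟩ :=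
    exists_taut K X hqm hanti hctrl hsurj hC₀ (kk := 2 * half) hCbig (z⁻¹ * x)
  have he₁ : pt K X x l₁ l₁.length = y := by
    rw [pt_end, hl₁, ha₁]; group
  have he₂ : pt K X y l₂ l₂.length = z := by
    rw [pt_end, hl₂, ha₂]; group
  have he₃ : pt K X z l₃ l₃.length = x := by
    rw [pt_end, hl₃, ha₃]; group
  obtain ⟨i₁, hi₁, i₂, hi₂, i₃, hi₃, hd₁₂, hd₂₃, hd₁₃⟩ :=
    tripod K X hδ hX hsurj hhyp hhalf (hloc₁ x) he₁ (hloc₂ y) he₂ (hloc₃ z) he₃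
  set p := pt K X x l₁ i₁ with hp
  set p₂ := pt K X y l₂ i₂ with hp₂
  set p₃ := pt K X z l₃ i₃ with hp₃
  -- θ-values of the word pieces
  have hsplit : ∀ (w : G) (l : List (RelLetter K X)) (a : ↥K ∗ FreeGroup ↥X)
      (i : ℕ), i ≤ l.length → evalWord K X l = a →
      theta K X (evalWord K X (l.take i)) = w⁻¹ * pt K X w l i ∧
      theta K X (evalWord K X (l.drop i)) = (pt K X w l i)⁻¹ * (w * theta K X a) := by
    intro w l a i hi hl
    constructor
    · unfold pt; group
    · have : evalWord K X l = evalWord K X (l.take i) * evalWord K X (l.drop i) := by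
        rw [← evalWord_append, List.take_append_drop]
      rw [hl] at this
      have h2 : theta K X a = theta K X (evalWord K X (l.take i))
          * theta K X (evalWord K X (l.drop i)) := by rw [this, map_mul]
      have h3 : theta K X (evalWord K X (l.take i)) = w⁻¹ * pt K X w l i := by
        unfold pt; group
      rw [h3] at h2
      rw [show theta K X (evalWord K X (List.drop i l))
          = (w⁻¹ * pt K X w l i)⁻¹ * ((w⁻¹ * pt K X w l i) * theta K X (evalWord K X (List.drop i l))) by group, ← h2]
      group
  -- side 1 splitting
  have hside : ∀ (w w' : G) (l : List (RelLetter K X)) (a : ↥K ∗ FreeGroup ↥X) (i : ℕ),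
      i ≤ l.length → evalWord K X l = a → l.length = wordLen K X a →
      theta K X a = w⁻¹ * w' →
      Tf K X φ C a ≥ PhiF K X φ C (w⁻¹ * pt K X w l i)
        + PhiF K X φ C ((pt K X w l i)⁻¹ * w') - Dq := by
    intro w w' l a i hi hl hlen hθ
    obtain ⟨ht, hd⟩ := hsplit w l a i hi hl
    have h1 := Tf_split K X hqm hC0 (C := C) (φ := φ) hl hlen i hi
    have h2 := PhiF_le K X hqm hctrl hC1 hsurj ht
    have hd' : theta K X (evalWord K X (l.drop i)) = (pt K X w l i)⁻¹ * w' := by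
      rw [hd, hθ]
      group
    have h3 := PhiF_le K X hqm hctrl hC1 hsurj hd'
    linarith
  have hS₁ := hside x y l₁ a₁ i₁ hi₁ hl₁ hlen₁ ha₁
  have hS₂ := hside y z l₂ a₂ i₂ hi₂ hl₂ hlen₂ ha₂
  have hS₃ := hside z x l₃ a₃ i₃ hi₃ hl₃ hlen₃ ha₃
  rw [← hp] at hS₁
  rw [← hp₂] at hS₂
  rw [← hp₃] at hS₃
  -- move p₂ and p₃ to p
  have hσ₂ : PhiF K X φ C (p₂⁻¹ * p) + PhiF K X φ C (p⁻¹ * p₂) ≤ 2 * C * (60 * δ + 40) := by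
    have h := sigma_le K X hqm hanti hctrl hC1 hC0 hsurj p₂ p
    have hsym : dR K X p₂ p = dR K X p p₂ := dR_symm K X hsurj p₂ p
    nlinarith [hd₁₂, dR_nonneg K X p₂ p]
  have hσ₃ : PhiF K X φ C (p₃⁻¹ * p) + PhiF K X φ C (p⁻¹ * p₃) ≤ 2 * C * (60 * δ + 40) := by
    have h := sigma_le K X hqm hanti hctrl hC1 hC0 hsurj p₃ p
    have hsym : dR K X p₃ p = dR K X p p₃ := dR_symm K X hsurj p₃ p
    nlinarith [hd₁₃, dR_nonneg K X p₃ p]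
  have hm₂a : PhiF K X φ C (y⁻¹ * p) ≤ PhiF K X φ C (y⁻¹ * p₂) + PhiF K X φ C (p₂⁻¹ * p) + D₁ := by
    have := hmul (y⁻¹ * p₂) (p₂⁻¹ * p)
    rw [show y⁻¹ * p₂ * (p₂⁻¹ * p) = y⁻¹ * p by group] at this
    exact this
  have hm₂b : PhiF K X φ C (p⁻¹ * z) ≤ PhiF K X φ C (p⁻¹ * p₂) + PhiF K X φ C (p₂⁻¹ * z) + D₁ := by
    have := hmul (p⁻¹ * p₂) (p₂⁻¹ * z)
    rw [show p⁻¹ * p₂ * (p₂⁻¹ * z) = p⁻¹ * z by group] at this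
    exact this
  have hm₃a : PhiF K X φ C (z⁻¹ * p) ≤ PhiF K X φ C (z⁻¹ * p₃) + PhiF K X φ C (p₃⁻¹ * p) + D₁ := by
    have := hmul (z⁻¹ * p₃) (p₃⁻¹ * p)
    rw [show z⁻¹ * p₃ * (p₃⁻¹ * p) = z⁻¹ * p by group] at this
    exact this
  have hm₃b : PhiF K X φ C (p⁻¹ * x) ≤ PhiF K X φ C (p⁻¹ * p₃) + PhiF K X φ C (p₃⁻¹ * x) + D₁ := by
    have := hmul (p⁻¹ * p₃) (p₃⁻¹ * x)
    rw [show p⁻¹ * p₃ * (p₃⁻¹ * x) = p⁻¹ * x by group] at this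
    exact this
  -- lower bound for the forward cycle
  have hfw : cyc K X φ C x y z ≥
      (PhiF K X φ C (x⁻¹ * p) + PhiF K X φ C (p⁻¹ * y)
       + PhiF K X φ C (y⁻¹ * p) + PhiF K X φ C (p⁻¹ * z)
       + PhiF K X φ C (z⁻¹ * p) + PhiF K X φ C (p⁻¹ * x))
      - 4 * C * (60 * δ + 40) - 4 * D₁ - 3 * (Dq + C₀) := by
    unfold cyc
    have e₁ : PhiF K X φ C (x⁻¹ * y) ≥ Tf K X φ C a₁ - C₀ := by linarith [hT₁]
    have e₂ : PhiF K X φ C (y⁻¹ * z) ≥ Tf K X φ C a₂ - C₀ := by linarith [hT₂]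
    have e₃ : PhiF K X φ C (z⁻¹ * x) ≥ Tf K X φ C a₃ - C₀ := by linarith [hT₃]
    linarith [hS₁, hS₂, hS₃, hσ₂, hσ₃, hm₂a, hm₂b, hm₃a, hm₃b]
  -- upper bound for the reverse cycle
  have hbw : cyc K X φ C z y x ≤
      (PhiF K X φ C (x⁻¹ * p) + PhiF K X φ C (p⁻¹ * y)
       + PhiF K X φ C (y⁻¹ * p) + PhiF K X φ C (p⁻¹ * z)
       + PhiF K X φ C (z⁻¹ * p) + PhiF K X φ C (p⁻¹ * x))
      + 3 * D₁ := by
    unfold cyc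
    have f₁ : PhiF K X φ C (z⁻¹ * y) ≤ PhiF K X φ C (z⁻¹ * p) + PhiF K X φ C (p⁻¹ * y) + D₁ := by
      have := hmul (z⁻¹ * p) (p⁻¹ * y)
      rw [show z⁻¹ * p * (p⁻¹ * y) = z⁻¹ * y by group] at this
      exact this
    have f₂ : PhiF K X φ C (y⁻¹ * x) ≤ PhiF K X φ C (y⁻¹ * p) + PhiF K X φ C (p⁻¹ * x) + D₁ := by
      have := hmul (y⁻¹ * p) (p⁻¹ * x)
      rw [show y⁻¹ * p * (p⁻¹ * x) = y⁻¹ * x by group] at this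
      exact this
    have f₃ : PhiF K X φ C (x⁻¹ * z) ≤ PhiF K X φ C (x⁻¹ * p) + PhiF K X φ C (p⁻¹ * z) + D₁ := by
      have := hmul (x⁻¹ * p) (p⁻¹ * z)
      rw [show x⁻¹ * p * (p⁻¹ * z) = x⁻¹ * z by group] at this
      exact this
    linarith
  linarith

end N
end QMExt

namespace QMExt

/-- locality constant -/
noncomputable def halfC (δ : ℝ) : ℕ := ⌈(8:ℝ) * δ⌉₊ + 5

/-- the constant `M` of the main theorem -/
noncomputable def Mconst (δ : ℝ) : ℝ :=
  (7 * (2 * ((2 * halfC δ : ℕ) : ℝ) + 8)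
    + 4 * (2 * ((2 * halfC δ : ℕ) : ℝ) + 5) * (60 * δ + 40) + 6 + 9) / 2

section P
variable {G : Type*} [Group G]

set_option maxHeartbeats 2000000 in
theorem core {δ : ℝ} (hδ : 0 ≤ δ) (K : Subgroup G) (X : Set G)
    (hX : ∀ x ∈ X, x⁻¹ ∈ X) (hsurj : Function.Surjective (theta K X))
    (hhyp : HypWith ((K : Set G) ∪ X) δ) (φ : ↥K → ℝ) (hqm : IsQM φ) (hanti : IsAntisym φ)
    {C₀ : ℝ} (hC₀ : 0 < C₀) (hctrl : LinearlyControlled K X φ C₀) :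
    ∃ Φ : G → ℝ, IsQM Φ ∧ IsAntisym Φ ∧ (∀ k : ↥K, Φ ↑k = φ k) ∧
      qmDefect Φ ≤ Mconst δ * C₀ + Mconst δ * qmDefect φ := by
  set half := halfC δ with hhalfdef
  have hhalf : 8 * δ + 5 ≤ (half : ℝ) := by
    have h1 : (8:ℝ) * δ ≤ (⌈(8:ℝ) * δ⌉₊ : ℝ) := Nat.le_ceil _
    have h2 : ((half : ℕ) : ℝ) = (⌈(8:ℝ) * δ⌉₊ : ℝ) + 5 := by
      rw [hhalfdef]
      unfold halfC
      push_cast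
      ring
    linarith
  set Dq := qmDefect φ with hDqdef
  have hDq0 : 0 ≤ Dq := qmDefect_nonneg hqm hanti
  set kR : ℝ := ((2 * half : ℕ) : ℝ) with hkRdef
  have hkR0 : 0 ≤ kR := Nat.cast_nonneg _
  set C : ℝ := 3 * Dq + C₀ * (2 * kR) + 2 * C₀ with hCdef
  have hCbig : 3 * qmDefect φ + C₀ * (2 * ((2 * half : ℕ) : ℝ)) + 2 * C₀ ≤ C := le_of_eq rfl
  have hC1 : C₀ ≤ C := by nlinarith
  have hC0 : 0 ≤ C := by linarith
  set E : ℝ := 7 * (Dq + C + 2 * C₀) + 4 * C * (60 * δ + 40) + 3 * Dq + 3 * C₀ with hEdef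
  have hE0 : 0 ≤ E := by nlinarith
  set Ψ : G → ℝ := fun g => (PhiF K X φ C g - PhiF K X φ C g⁻¹) / 2 with hΨdef
  -- defect of Ψ
  have hΨdefect : ∀ g h : G, |Ψ g + Ψ h - Ψ (g * h)| ≤ E / 2 := by
    intro g h
    have hA := main_cyc K X hδ hX hsurj hhyp hqm hanti hctrl hC₀ hhalf hCbig 1 g (g * h)
    have hB := main_cyc K X hδ hX hsurj hhyp hqm hanti hctrl hC₀ hhalf hCbig (g * h) g 1
    unfold cyc at hA hB
    rw [← hDqdef, ← hEdef] at hA hB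
    have e1 : (1:G)⁻¹ * g = g := by group
    have e2 : g⁻¹ * (g * h) = h := by group
    have e3 : (g * h)⁻¹ * 1 = (g * h)⁻¹ := by group
    have e4 : (g * h)⁻¹ * g = h⁻¹ := by group
    have e5 : g⁻¹ * (1:G) = g⁻¹ := by group
    have e6 : (1:G)⁻¹ * (g * h) = g * h := by group
    rw [e1, e2, e3, e4, e5, e6] at hA hB
    have hid : Ψ g + Ψ h - Ψ (g * h) =
        ((PhiF K X φ C g + PhiF K X φ C h + PhiF K X φ C (g * h)⁻¹)
          - (PhiF K X φ C h⁻¹ + PhiF K X φ C g⁻¹ + PhiF K X φ C (g * h))) / 2 := by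
      rw [hΨdef]
      ring
    rw [hid, abs_div]
    rw [abs_of_nonneg (by norm_num : (0:ℝ) ≤ (2:ℝ))]
    rw [div_le_div_iff_of_pos_right (by norm_num : (0:ℝ) < 2)]
    rw [abs_le]
    constructor <;> linarith
  -- Ψ is close to φ on K
  set β : ℝ := Dq + 3 * C₀ with hβdef
  have hβ0 : 0 ≤ β := by linarith
  have hΨK : ∀ k : ↥K, |Ψ ((k : G)) - φ k| ≤ β / 2 := by
    intro k
    have hup := PhiF_le_phi K X hqm hctrl hC1 hsurj k
    have hlo := phi_le_PhiF K X hqm hctrl hC1 hsurj k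
    have hupI := PhiF_le_phi K X hqm hctrl hC1 hsurj k⁻¹
    have hloI := phi_le_PhiF K X hqm hctrl hC1 hsurj k⁻¹
    have hcoe : ((k⁻¹ : ↥K) : G) = ((k : G))⁻¹ := by simp
    rw [hcoe] at hupI hloI
    have hφinv : φ k⁻¹ = - φ k := hanti k
    rw [hφinv] at hupI hloI
    rw [hΨdef]
    rw [abs_le]
    constructor <;> [skip; skip] <;> simp only [] <;> linarith
  -- the patched extension
  classical
  set Φ' : G → ℝ := fun g => if h : g ∈ K then φ ⟨g, h⟩ else Ψ g with hΦ'def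
  have hext : ∀ k : ↥K, Φ' ((k : G)) = φ k := by
    intro k
    rw [hΦ'def]
    simp only [dif_pos k.2]
  have hdiff : ∀ g : G, |Φ' g - Ψ g| ≤ β / 2 := by
    intro g
    rw [hΦ'def]
    by_cases hg : g ∈ K
    · simp only [dif_pos hg]
      have := hΨK ⟨g, hg⟩
      rw [abs_sub_comm]
      exact this
    · simp only [dif_neg hg, sub_self, abs_zero]
      linarith
  have hanti' : IsAntisym Φ' := by
    intro g
    rw [hΦ'def]
    by_cases hg : g ∈ K
    · have hg' : g⁻¹ ∈ K := inv_mem hg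
      simp only [dif_pos hg, dif_pos hg']
      have : (⟨g⁻¹, hg'⟩ : ↥K) = (⟨g, hg⟩ : ↥K)⁻¹ := by
        ext
        simp
      rw [this]
      exact hanti _
    · have hg' : g⁻¹ ∉ K := by
        intro hcon
        exact hg (by simpa using inv_mem hcon)
      simp only [dif_neg hg, dif_neg hg']
      rw [hΨdef]
      simp only [inv_inv]
      ring
  have hqm' : ∀ g h : G, |Φ' g + Φ' h - Φ' (g * h)| ≤ E / 2 + 3 * (β / 2) := by
    intro g h
    have d1 := hdiff g
    have d2 := hdiff h
    have d3 := hdiff (g * h)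
    have d4 := hΨdefect g h
    have a1 := abs_le.mp d1
    have a2 := abs_le.mp d2
    have a3 := abs_le.mp d3
    have a4 := abs_le.mp d4
    rw [abs_le]
    constructor <;> linarith
  refine ⟨Φ', ⟨E / 2 + 3 * (β / 2), hqm'⟩, hanti', hext, ?_⟩
  have hsup : qmDefect Φ' ≤ E / 2 + 3 * (β / 2) := by
    apply Real.sSup_le
    · rintro r ⟨g, h, rfl⟩
      exact hqm' g h
    · linarith
  refine le_trans hsup ?_
  -- the numerical estimate
  set S : ℝ := C₀ + Dq with hSdef
  have hS0 : 0 < S := by linarith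
  have hCS : C ≤ (2 * kR + 5) * S := by nlinarith
  have hES : E ≤ (7 * (2 * kR + 8) + 4 * (2 * kR + 5) * (60 * δ + 40) + 6) * S := by
    have h1 : 7 * (Dq + C + 2 * C₀) ≤ 7 * ((2 * kR + 8) * S) := by nlinarith
    have h2 : 4 * C * (60 * δ + 40) ≤ 4 * ((2 * kR + 5) * S) * (60 * δ + 40) := by
      have hpos : (0:ℝ) ≤ 4 * (60 * δ + 40) := by linarith
      nlinarith
    have h3 : 3 * Dq + 3 * C₀ ≤ 6 * S := by nlinarith
    nlinarith
  have hfin : E / 2 + 3 * (β / 2) ≤ Mconst δ * S := by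
    have hβS : 3 * (β / 2) ≤ (9 / 2) * S := by
      rw [hβdef]
      nlinarith
    have hM : Mconst δ = (7 * (2 * kR + 8) + 4 * (2 * kR + 5) * (60 * δ + 40) + 6 + 9) / 2 := by
      unfold Mconst
      rw [hkRdef, hhalfdef]
    rw [hM]
    nlinarith
  calc E / 2 + 3 * (β / 2) ≤ Mconst δ * S := hfin
    _ = Mconst δ * C₀ + Mconst δ * Dq := by rw [hSdef]; ring

end P
end QMExt

namespace QMExt
section Q
variable {G : Type*} [Group G] (K : Subgroup G) (X : Set G)

set_option maxHeartbeats 1000000 in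
theorem upgrade {δ : ℝ} (hδ : 0 ≤ δ) (hX : ∀ x ∈ X, x⁻¹ ∈ X)
    (hsurj : Function.Surjective (theta K X)) (hhyp : HypWith ((K : Set G) ∪ X) δ)
    (φ : ↥K → ℝ) (hqm : IsQM φ) (hanti : IsAntisym φ) (hc : Controlled K X φ) :
    ∃ C₀ : ℝ, 0 < C₀ ∧ LinearlyControlled K X φ C₀ := by
  obtain ⟨f, hf⟩ := hc
  set half := halfC δ with hhalfdef
  have hhalf : 8 * δ + 5 ≤ (half : ℝ) := by
    have h1 : (8:ℝ) * δ ≤ (⌈(8:ℝ) * δ⌉₊ : ℝ) := Nat.le_ceil _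
    have h2 : ((half : ℕ) : ℝ) = (⌈(8:ℝ) * δ⌉₊ : ℝ) + 5 := by
      rw [hhalfdef]; unfold halfC; push_cast; ring
    linarith
  set Dq := qmDefect φ with hDqdef
  have hDq0 : 0 ≤ Dq := qmDefect_nonneg hqm hanti
  set F4 := f (4 * half) with hF4def
  have hFbound : ∀ a : ↥K ∗ FreeGroup ↥X, theta K X a = 1 → wordLen K X a ≤ 4 * half →
      |phit K X φ a| ≤ F4 := by
    intro a ha hlen
    exact hf (4 * half) a (by rw [MonoidHom.mem_ker]; exact ha) hlen
  have hF40 : 0 ≤ F4 := by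
    have := hFbound 1 (by simp) (by rw [wordLen_one]; omega)
    have h0 : phit K X φ (1 : ↥K ∗ FreeGroup ↥X) = 0 := by
      unfold phit
      rw [map_one]
      exact antisym_one hanti
    rw [h0] at this
    simpa using this
  set κ := F4 + 3 * Dq with hκdef
  have hκ0 : 0 ≤ κ := by linarith
  have main : ∀ n : ℕ, ∀ l : List (RelLetter K X), l.length ≤ n →
      theta K X (evalWord K X l) = 1 →
      |phit K X φ (evalWord K X l)| ≤ κ * (l.length : ℝ) + κ := by
    intro n
    induction n with
    | zero =>
        intro l hl hθ
        have : l = [] := List.length_eq_zero_iff.mp (by omega)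
        subst this
        have h0 : phit K X φ (evalWord K X ([] : List (RelLetter K X))) = 0 := by
          unfold phit
          rw [evalWord_nil, map_one]
          exact antisym_one hanti
        rw [h0]
        simp
        positivity
    | succ n ih =>
        intro l hl hθ
        by_cases hP : ∀ i j : ℕ, i ≤ j → j ≤ l.length → j - i ≤ 2 * half →
            dN K X (theta K X (evalWord K X ((l.drop i).take (j - i)))) = j - i
        · -- l is a closed local geodesic, hence short
          have hloc : PathLocGeo K X (2 * half) (1 : G) l := by
            intro i j hij hj hjk
            have := hP i j hij hj hjk
            unfold dR
            rw [pt_sub K X hij, this]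
            push_cast [Nat.cast_sub hij]
            ring
          have hclosed : pt K X (1 : G) l l.length = 1 := by
            rw [pt_end, hθ, mul_one]
          have hshort := closed_locgeo K X hδ hX hsurj hhyp hhalf hloc hclosed
          have hwl : wordLen K X (evalWord K X l) ≤ 4 * half := by
            have := wordLen_le K X (evalWord K X l) l rfl
            omega
          have := hFbound (evalWord K X l) hθ hwl
          have hlen0 : (0:ℝ) ≤ κ * (l.length : ℝ) := by positivity
          linarith
        · -- there is a shortcut
          push_neg at hP
          obtain ⟨i, j, hij, hj, hjk, hne⟩ := hP
          set sub := (l.drop i).take (j - i) with hsubdef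
          have hub : dN K X (theta K X (evalWord K X sub)) ≤ j - i := by
            have h1 := dN_le K X _ sub rfl
            have h2 : sub.length = j - i := by
              rw [hsubdef]
              simp [List.length_take, List.length_drop]
              omega
            omega
          have hlt : dN K X (theta K X (evalWord K X sub)) < j - i := by omega
          have hji1 : 1 ≤ j - i := by omega
          obtain ⟨q', hq', hq'len⟩ := exists_geo_word K X hsurj (theta K X (evalWord K X sub))
          set l' := l.take i ++ q' ++ l.drop j with hl'def
          have ha'eq : evalWord K X l' = evalWord K X (l.take i) * evalWord K X q'
              * evalWord K X (l.drop j) := by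
            rw [hl'def, evalWord_append, evalWord_append]
          have haeq : evalWord K X l = evalWord K X (l.take i) * evalWord K X sub
              * evalWord K X (l.drop j) := by
            rw [evalWord_take_drop K X l j, evalWord_take_mid K X hij l]
          have hθ' : theta K X (evalWord K X l') = 1 := by
            rw [ha'eq, map_mul, map_mul, hq']
            rw [← hθ, haeq, map_mul, map_mul]
          have hlenl' : l'.length ≤ l.length - 1 := by
            rw [hl'def]
            simp only [List.length_append, List.length_take, List.length_drop]
            omega
          have hlen1 : 1 ≤ l.length := by omega
          -- the small relation
          set r := evalWord K X sub * (evalWord K X q')⁻¹ with hrdef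
          have hrth : theta K X r = 1 := by
            rw [hrdef, map_mul, map_inv, hq']
            group
          have hrlen : wordLen K X r ≤ 4 * half := by
            have h1 : wordLen K X r ≤ wordLen K X (evalWord K X sub)
                + wordLen K X (evalWord K X q')⁻¹ := wordLen_mul_le K X _ _
            have h2 : wordLen K X (evalWord K X q')⁻¹ = wordLen K X (evalWord K X q') :=
              wordLen_inv K X _
            have h3 : wordLen K X (evalWord K X sub) ≤ j - i := by
              have := wordLen_le K X _ sub rfl
              have h2' : sub.length = j - i := by
                rw [hsubdef]
                simp [List.length_take, List.length_drop]
                omega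
              omega
            have h4 : wordLen K X (evalWord K X q') ≤ q'.length := wordLen_le K X _ q' rfl
            omega
          have hrphi : |phit K X φ r| ≤ F4 := hFbound r hrth hrlen
          -- compare
          have hmid : |phit K X φ (evalWord K X l) - phit K X φ (evalWord K X l')
              - phit K X φ r| ≤ 3 * Dq := by
            have heta : eta K X (evalWord K X l) = eta K X (evalWord K X (l.take i)) * eta K X r
                * (eta K X (evalWord K X q') * eta K X (evalWord K X (l.drop j))) := by
              rw [haeq, map_mul, map_mul]
              have : eta K X (evalWord K X sub) = eta K X r * eta K X (evalWord K X q') := by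
                rw [hrdef, map_mul, map_inv]
                group
              rw [this]
              group
            have heta' : eta K X (evalWord K X l') = eta K X (evalWord K X (l.take i))
                * (eta K X (evalWord K X q') * eta K X (evalWord K X (l.drop j))) := by
              rw [ha'eq, map_mul, map_mul]
              group
            have hqmid := qm_mid hqm (eta K X (evalWord K X (l.take i))) (eta K X r)
              (eta K X (evalWord K X q') * eta K X (evalWord K X (l.drop j)))
            unfold phit
            rw [heta, heta']
            exact hqmid
          have hihl' := ih l' (by omega) hθ'
          have hcast : (l'.length : ℝ) ≤ (l.length : ℝ) - 1 := by
            have : l'.length + 1 ≤ l.length := by omega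
            have := (Nat.cast_le (α := ℝ)).mpr this
            push_cast at this
            linarith
          have habs1 := abs_le.mp hmid
          have habs2 := abs_le.mp hrphi
          have habs3 := abs_le.mp hihl'
          rw [abs_le]
          constructor <;> nlinarith [hκ0, hcast]
  refine ⟨κ + 1, by linarith, ?_⟩
  intro n a hker hlen
  obtain ⟨l, hla, hll⟩ := exists_min_word K X a
  have hθ : theta K X (evalWord K X l) = 1 := by
    rw [hla]
    rw [MonoidHom.mem_ker] at hker
    exact hker
  have := main l.length l le_rfl hθ
  rw [hla] at this
  have hcast : (l.length : ℝ) ≤ (n : ℝ) := by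
    exact_mod_cast (by omega : l.length ≤ n)
  have hn0 : (0:ℝ) ≤ (n : ℝ) := Nat.cast_nonneg _
  calc |φ (eta K X a)| = |phit K X φ a| := rfl
    _ ≤ κ * (l.length : ℝ) + κ := this
    _ ≤ (κ + 1) * (n : ℝ) + (κ + 1) := by nlinarith
end Q
end QMExt


open QMExt

universe u

/-- **Main Theorem.** If the Cayley graph `Γ(G, K ⊔ X)` is `δ`-hyperbolic and
`φ` is an antisymmetric `(G,X)`-controlled quasimorphism on `K`, then `φ` extends to an
antisymmetric quasimorphism on `G`.  Moreover there is a constant `M` depending only on `δ`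
such that if `φ` is linearly `(G,X)`-controlled with constant `C₀ > 0`, then the extension
can be chosen with `D(Φ) ≤ M·C₀ + M·D(φ)`. -/
theorem extension_of_controlled_quasimorphism (δ : ℝ) (hδ : 0 ≤ δ) :
    ∃ M : ℝ, ∀ (G : Type u) [Group G], ∀ (K : Subgroup G) (X : Set G),
      (∀ x ∈ X, x⁻¹ ∈ X) →
      Function.Surjective (theta K X) →
      HypWith ((K : Set G) ∪ X) δ →
      ∀ φ : ↥K → ℝ, IsQM φ → IsAntisym φ →
        (Controlled K X φ →
          ∃ Φ : G → ℝ, IsQM Φ ∧ IsAntisym Φ ∧ ∀ k : ↥K, Φ ↑k = φ k) ∧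
        (∀ C₀ : ℝ, 0 < C₀ → LinearlyControlled K X φ C₀ →
          ∃ Φ : G → ℝ, IsQM Φ ∧ IsAntisym Φ ∧ (∀ k : ↥K, Φ ↑k = φ k) ∧
            qmDefect Φ ≤ M * C₀ + M * qmDefect φ) := by
  refine ⟨Mconst δ, ?_⟩
  intro G _ K X hX hsurj hhyp φ hqm hanti
  constructor
  · intro hc
    obtain ⟨C₀, hC₀, hctrl⟩ := upgrade K X hδ hX hsurj hhyp φ hqm hanti hc
    obtain ⟨Φ, h1, h2, h3, _⟩ := core hδ K X hX hsurj hhyp φ hqm hanti hC₀ hctrl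
    exact ⟨Φ, h1, h2, h3⟩
  · intro C₀ hC₀ hctrl
    exact core hδ K X hX hsurj hhyp φ hqm hanti hC₀ hctrl
end

section
/- Let G be a group generated by a subgroup K together with a finite symmetric set X. If a quasimorphism φ on K extends to a quasimorphism on G, then φ is linearly (G,X)-controlled (with some constant C₀ > 0). -/
open Monoid
open scoped Monoid.Coprod

namespace QMExt

section Helpers

variable {Q : Type*} [Group Q]

lemma eval_surj (P : Subgroup Q) (Y : Set Q) (a : ↥P ∗ FreeGroup ↥Y) :
    ∃ l : List (RelLetter P Y), evalWord P Y l = a := by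
  induction a using Coprod.induction_on with
  | inl k => exact ⟨[Sum.inl k], by simp [evalWord, evalLetter]⟩
  | inr w =>
    induction w using FreeGroup.induction_on with
    | C1 => exact ⟨[], by simp [evalWord]⟩
    | of x => exact ⟨[Sum.inr (x, true)], by
        simp only [evalWord, List.map_cons, List.map_nil, List.prod_cons, List.prod_nil,
          mul_one, evalLetter]⟩
    | inv_of x ih =>
      exact ⟨[Sum.inr (x, false)], by
        simp only [evalWord, List.map_cons, List.map_nil, List.prod_cons, List.prod_nil,
          mul_one, evalLetter]; rfl⟩
    | mul x y ihx ihy =>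
      obtain ⟨l₁, h₁⟩ := ihx
      obtain ⟨l₂, h₂⟩ := ihy
      exact ⟨l₁ ++ l₂, by simp [evalWord] at h₁ h₂ ⊢; simp [h₁, h₂]⟩
  | mul x y ihx ihy =>
    obtain ⟨l₁, h₁⟩ := ihx
    obtain ⟨l₂, h₂⟩ := ihy
    exact ⟨l₁ ++ l₂, by simp [evalWord] at h₁ h₂ ⊢; simp [h₁, h₂]⟩

lemma qm_list {H : Type*} [Group H] (ψ : H → ℝ) (D : ℝ)
    (hD : ∀ g h : H, |ψ g + ψ h - ψ (g * h)| ≤ D) (l : List H) :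
    |ψ l.prod - (l.map ψ).sum| ≤ D * l.length + |ψ 1| := by
  induction l with
  | nil => simp
  | cons a t ih =>
    have h1 := hD a t.prod
    have hD0 : 0 ≤ D := le_trans (abs_nonneg _) (hD 1 1)
    simp only [List.prod_cons, List.map_cons, List.sum_cons, List.length_cons]
    have : |ψ (a * t.prod) - (ψ a + (t.map ψ).sum)| ≤ D + (D * t.length + |ψ 1|) := by
      have := abs_sub_le (ψ (a * t.prod)) (ψ a + ψ t.prod) (ψ a + (t.map ψ).sum)
      have h2 : |ψ (a * t.prod) - (ψ a + ψ t.prod)| ≤ D := by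
        rw [abs_sub_comm]; simpa using h1
      have h3 : |ψ a + ψ t.prod - (ψ a + (t.map ψ).sum)| = |ψ t.prod - (t.map ψ).sum| := by
        ring_nf
      calc |ψ (a * t.prod) - (ψ a + (t.map ψ).sum)| ≤ _ + _ := this
        _ ≤ D + (D * t.length + |ψ 1|) := add_le_add h2 (h3 ▸ ih)
    push_cast
    linarith

lemma sum_diff {α : Type*} (f f' : α → ℝ) (c : ℝ) (hc : 0 ≤ c) (l : List α)
    (h : ∀ a ∈ l, |f a - f' a| ≤ c) :
    |(l.map f).sum - (l.map f').sum| ≤ c * l.length := by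
  induction l with
  | nil => simp
  | cons a t ih =>
    simp only [List.map_cons, List.sum_cons, List.length_cons]
    have h1 : |f a - f' a| ≤ c := h a List.mem_cons_self
    have h2 := ih (fun x hx => h x (List.mem_cons_of_mem a hx))
    have : f a + (t.map f).sum - (f' a + (t.map f').sum)
        = (f a - f' a) + ((t.map f).sum - (t.map f').sum) := by ring
    rw [this]
    calc |_ + _| ≤ |f a - f' a| + |(t.map f).sum - (t.map f').sum| := abs_add_le _ _
      _ ≤ c + c * t.length := add_le_add h1 h2
      _ ≤ c * ((t.length : ℕ) + 1 : ℕ) := by push_cast; linarith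

def gK (P : Subgroup Q) (Y : Set Q) : RelLetter P Y → ↥P
  | Sum.inl k => k
  | Sum.inr _ => 1

def hg (P : Subgroup Q) (Y : Set Q) : RelLetter P Y → Q
  | Sum.inl k => (k : Q)
  | Sum.inr (x, true) => (x : Q)
  | Sum.inr (x, false) => (x : Q)⁻¹

lemma eta_evalWord (P : Subgroup Q) (Y : Set Q) (l : List (RelLetter P Y)) :
    eta P Y (evalWord P Y l) = (l.map (gK P Y)).prod := by
  rw [evalWord, map_list_prod, List.map_map]
  congr 1
  refine List.map_congr_left fun a _ => ?_
  rcases a with k | ⟨x, b⟩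
  · simp [eta, evalLetter, gK]
  · cases b <;> simp [eta, evalLetter, gK]

lemma theta_evalWord_s3 (P : Subgroup Q) (Y : Set Q) (l : List (RelLetter P Y)) :
    theta P Y (evalWord P Y l) = (l.map (hg P Y)).prod := by
  rw [evalWord, map_list_prod, List.map_map]
  congr 1
  refine List.map_congr_left fun a _ => ?_
  rcases a with k | ⟨x, b⟩
  · simp [theta, evalLetter, hg]
  · cases b <;> simp [theta, evalLetter, hg]

end Helpers

end QMExt
open QMExt

/-- If `G` is generated by `K` together with a finite symmetric set `X`, then every
extendable quasimorphism on `K` is linearly `(G,X)`-controlled. -/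
theorem extendable_implies_linearly_controlled {G : Type*} [Group G]
    (K : Subgroup G) (X : Set G)
    (hXfin : X.Finite) (hXsym : ∀ x ∈ X, x⁻¹ ∈ X)
    (hgen : Function.Surjective (theta K X))
    (φ : ↥K → ℝ) (hqm : IsQM φ)
    (hext : ∃ ψ : G → ℝ, IsQM ψ ∧ ∀ k : ↥K, ψ ↑k = φ k) :
    ∃ C₀ : ℝ, 0 < C₀ ∧ LinearlyControlled K X φ C₀ := by
  obtain ⟨ψ, ⟨Dψ, hDψ⟩, hψφ⟩ := hext
  obtain ⟨Dφ, hDφ⟩ := hqm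
  have hDψ0 : 0 ≤ Dψ := le_trans (abs_nonneg _) (hDψ 1 1)
  have hDφ0 : 0 ≤ Dφ := le_trans (abs_nonneg _) (hDφ 1 1)
  obtain ⟨M₀, hM₀⟩ := (hXfin.image (fun g => |ψ g|)).bddAbove
  set M : ℝ := max M₀ 0 with hM
  have hMX : ∀ x ∈ X, |ψ x| ≤ M := fun x hx =>
    le_trans (hM₀ ⟨x, hx, rfl⟩) (le_max_left _ _)
  have hM0 : (0 : ℝ) ≤ M := le_max_right _ _
  set C₀ : ℝ := Dφ + Dψ + 2 * |ψ 1| + 2 * |φ 1| + M + 1 with hC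
  have hC0 : 0 < C₀ := by
    have := abs_nonneg (ψ 1); have := abs_nonneg (φ 1); rw [hC]; linarith
  refine ⟨C₀, hC0, ?_⟩
  intro n a ha hlen
  -- extract a word representing a of length = wordLen a ≤ n
  have hne : {m | ∃ l : List (RelLetter K X), evalWord K X l = a ∧ l.length = m}.Nonempty := by
    obtain ⟨l, hl⟩ := QMExt.eval_surj K X a
    exact ⟨l.length, l, hl, rfl⟩
  obtain ⟨l, hl, hllen⟩ := Nat.sInf_mem hne
  have hln : (l.length : ℝ) ≤ n := by
    have : l.length ≤ n := by rw [hllen]; exact hlen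
    exact_mod_cast this
  subst hl
  -- the three estimates
  set m : ℝ := (l.length : ℝ) with hm
  have hm0 : 0 ≤ m := Nat.cast_nonneg _
  -- E1 : φ(η a) vs sum over K-letters
  have E1 : |φ (eta K X (evalWord K X l)) - (l.map (fun t => φ (QMExt.gK K X t))).sum|
      ≤ Dφ * m + |φ 1| := by
    have := QMExt.qm_list φ Dφ hDφ (l.map (QMExt.gK K X))
    rw [List.map_map, List.length_map] at this
    simp only [Function.comp_def] at this
    rw [QMExt.eta_evalWord]
    exact this
  -- E2 : bound on the ψ-sum
  have hprod1 : (l.map (QMExt.hg K X)).prod = 1 := by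
    rw [← QMExt.theta_evalWord_s3]
    exact ha
  have E2 : |(l.map (fun t => ψ (QMExt.hg K X t))).sum| ≤ Dψ * m + 2 * |ψ 1| := by
    have := QMExt.qm_list ψ Dψ hDψ (l.map (QMExt.hg K X))
    rw [List.map_map, List.length_map, hprod1] at this
    simp only [Function.comp_def] at this
    have h := abs_sub_abs_le_abs_sub (ψ 1) ((l.map (fun t => ψ (QMExt.hg K X t))).sum)
    have habs : |(l.map (fun t => ψ (QMExt.hg K X t))).sum| - |ψ 1|
        ≤ |(l.map (fun t => ψ (QMExt.hg K X t))).sum - ψ 1| := by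
      have := abs_sub_abs_le_abs_sub ((l.map (fun t => ψ (QMExt.hg K X t))).sum) (ψ 1)
      exact this
    rw [abs_sub_comm] at this
    linarith
  -- E3 : compare the two sums letter by letter
  have E3 : |(l.map (fun t => φ (QMExt.gK K X t))).sum
      - (l.map (fun t => ψ (QMExt.hg K X t))).sum| ≤ (|φ 1| + M) * m := by
    have := QMExt.sum_diff (fun t => φ (QMExt.gK K X t)) (fun t => ψ (QMExt.hg K X t))
      (|φ 1| + M) (by positivity) l ?_
    · exact this
    · intro t _
      rcases t with k | ⟨x, b⟩
      · simp only [QMExt.gK, QMExt.hg, hψφ k, sub_self, abs_zero]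
        positivity
      · cases b
        · simp only [QMExt.gK, QMExt.hg]
          have hx : ((x : G))⁻¹ ∈ X := hXsym _ x.2
          calc |φ 1 - ψ (x : G)⁻¹| ≤ |φ 1| + |ψ (x : G)⁻¹| := abs_sub _ _
            _ ≤ |φ 1| + M := by linarith [hMX _ hx]
        · simp only [QMExt.gK, QMExt.hg]
          calc |φ 1 - ψ (x : G)| ≤ |φ 1| + |ψ (x : G)| := abs_sub _ _
            _ ≤ |φ 1| + M := by linarith [hMX _ x.2]
  -- assemble
  have key : |φ (eta K X (evalWord K X l))|
      ≤ (Dφ + Dψ + |φ 1| + M) * m + (|φ 1| + 2 * |ψ 1|) := by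
    have t1 := abs_sub_abs_le_abs_sub (φ (eta K X (evalWord K X l)))
      ((l.map (fun t => φ (QMExt.gK K X t))).sum)
    have t2 := abs_sub_abs_le_abs_sub ((l.map (fun t => φ (QMExt.gK K X t))).sum)
      ((l.map (fun t => ψ (QMExt.hg K X t))).sum)
    nlinarith [abs_nonneg (φ (eta K X (evalWord K X l)))]
  have hCm : (Dφ + Dψ + |φ 1| + M) * m ≤ C₀ * m := by
    apply mul_le_mul_of_nonneg_right _ hm0
    rw [hC]; linarith [abs_nonneg (ψ 1), abs_nonneg (φ 1)]
  have hCn : C₀ * m ≤ C₀ * n := mul_le_mul_of_nonneg_left hln (le_of_lt hC0)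
  have hCc : |φ 1| + 2 * |ψ 1| ≤ C₀ := by
    rw [hC]; linarith [abs_nonneg (ψ 1), abs_nonneg (φ 1)]
  show |φ (eta K X (evalWord K X l))| ≤ C₀ * n + C₀
  linarith
end

section
/- Let G be a group, K a subgroup, and X a symmetric relative generating set of G with respect to K. If a quasimorphism φ on K is (G,X)-controlled (by some function f), then φ is G-quasi-invariant with D^G(φ) ≤ 2D(φ). -/
open Monoid
open scoped Monoid.Coprod

open QMExt

section AuxHelpers

variable {Q : Type*} [Group Q] (P : Subgroup Q) (Y : Set Q)

/-- Formal inverse of a letter. -/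
def QMExt.invL : RelLetter P Y → RelLetter P Y
  | Sum.inl k => Sum.inl k⁻¹
  | Sum.inr (x, b) => Sum.inr (x, !b)

lemma QMExt.evalLetter_invL (r : RelLetter P Y) :
    evalLetter P Y (QMExt.invL P Y r) = (evalLetter P Y r)⁻¹ := by
  rcases r with k | ⟨x, b⟩
  · simp [QMExt.invL, evalLetter]
  · cases b <;> simp [QMExt.invL, evalLetter]

lemma QMExt.evalWord_append_s4 (l1 l2 : List (RelLetter P Y)) :
    evalWord P Y (l1 ++ l2) = evalWord P Y l1 * evalWord P Y l2 := by
  simp [evalWord]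

lemma QMExt.evalWord_inv (l : List (RelLetter P Y)) :
    evalWord P Y ((l.map (QMExt.invL P Y)).reverse) = (evalWord P Y l)⁻¹ := by
  unfold evalWord
  rw [List.prod_inv_reverse, List.map_reverse, List.map_map, List.map_map]
  have h : List.map (evalLetter P Y ∘ QMExt.invL P Y) l
      = List.map ((fun x => x⁻¹) ∘ evalLetter P Y) l :=
    List.map_congr_left fun r _ => QMExt.evalLetter_invL P Y r
  rw [h]

lemma QMExt.exists_word_s4 (a : ↥P ∗ FreeGroup ↥Y) : ∃ l, evalWord P Y l = a := by
  induction a using Coprod.induction_on with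
  | inl k => exact ⟨[Sum.inl k], by simp [evalWord, evalLetter]⟩
  | inr w =>
      induction w using FreeGroup.induction_on with
      | C1 => exact ⟨[], by simp [evalWord]⟩
      | of x => exact ⟨[Sum.inr (x, true)], by simp [evalWord, evalLetter]⟩
      | inv_of x _ => exact ⟨[Sum.inr (x, false)], by simp [evalWord, evalLetter]⟩
      | mul x y hx hy =>
          obtain ⟨l1, h1⟩ := hx
          obtain ⟨l2, h2⟩ := hy
          exact ⟨l1 ++ l2, by rw [QMExt.evalWord_append_s4, h1, h2, map_mul]⟩
  | mul x y hx hy =>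
      obtain ⟨l1, h1⟩ := hx
      obtain ⟨l2, h2⟩ := hy
      exact ⟨l1 ++ l2, by rw [QMExt.evalWord_append_s4, h1, h2]⟩

variable {H : Type*} [Group H]

lemma QMExt.qmDefect_spec (φ : H → ℝ) (hqm : IsQM φ) :
    ∀ g h : H, |φ g + φ h - φ (g * h)| ≤ qmDefect φ := by
  obtain ⟨D0, hD0⟩ := hqm
  intro g h
  apply le_csSup
  · exact ⟨D0, by rintro r ⟨g, h, rfl⟩; exact hD0 g h⟩
  · exact ⟨g, h, rfl⟩

lemma QMExt.qm_pow {φ : H → ℝ} {D : ℝ}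
    (hD : ∀ g h : H, |φ g + φ h - φ (g * h)| ≤ D) (k : H) :
    ∀ n : ℕ, |φ (k ^ (n + 1)) - ((n : ℝ) + 1) * φ k| ≤ (n : ℝ) * D := by
  intro n
  induction n with
  | zero => simp
  | succ n ih =>
      have h1 := hD (k ^ (n + 1)) k
      rw [← pow_succ] at h1
      rw [abs_le] at h1 ih ⊢
      push_cast
      constructor <;> nlinarith [ih.1, ih.2, h1.1, h1.2]

lemma QMExt.forall_mul_le {y E : ℝ} (h : ∀ n : ℕ, ((n : ℝ) + 1) * y ≤ E) : y ≤ 0 := by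
  by_contra hy
  push_neg at hy
  obtain ⟨n, hn⟩ := exists_nat_gt (E / y)
  have h1 := h n
  have h2 : E / y < (n : ℝ) + 1 := by linarith
  rw [div_lt_iff₀ hy] at h2
  linarith

lemma QMExt.one_sided {G : Type*} [Group G]
    (K : Subgroup G) (X : Set G) (hgen : Function.Surjective (theta K X))
    (φ : ↥K → ℝ) (hqm : IsQM φ) (hctrl : Controlled K X φ)
    (k₁ k₂ : ↥K) (h : IsConj (k₁ : G) (k₂ : G)) :
    φ k₁ - φ k₂ ≤ 2 * qmDefect φ := by
  set D := qmDefect φ with hDdef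
  have hD := QMExt.qmDefect_spec φ hqm
  obtain ⟨c, hc⟩ := isConj_iff.mp h
  obtain ⟨a, ha⟩ := hgen c
  obtain ⟨l, hl⟩ := hctrl
  obtain ⟨w, hw⟩ := QMExt.exists_word_s4 K X a
  set p : ↥K := eta K X a with hp
  set m : ℕ := 2 * w.length + 2 with hm
  set E : ℝ := l m + 4 * D - φ p - φ p⁻¹ with hE
  have key : ∀ n : ℕ, ((n : ℝ) + 1) * (φ k₁ - φ k₂ - 2 * D) ≤ E := by
    intro n
    set N : ℕ := n + 1 with hN
    set b : ↥K ∗ FreeGroup ↥X :=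
      a * Coprod.inl (k₁ ^ N) * a⁻¹ * Coprod.inl ((k₂ ^ N)⁻¹) with hb
    have hword : evalWord K X
        (w ++ [Sum.inl (k₁ ^ N)] ++ (w.map (QMExt.invL K X)).reverse ++
          [Sum.inl ((k₂ ^ N)⁻¹)]) = b := by
      rw [QMExt.evalWord_append_s4, QMExt.evalWord_append_s4, QMExt.evalWord_append_s4,
        QMExt.evalWord_inv, hw]
      simp [evalWord, evalLetter, hb]
    have hlen : wordLen K X b ≤ m := by
      apply Nat.sInf_le
      refine ⟨_, hword, ?_⟩
      simp [hm]
      omega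
    have hker : b ∈ (theta K X).ker := by
      have hconj : c * (k₁ : G) ^ N * c⁻¹ = (k₂ : G) ^ N := by
        rw [← hc, conj_pow]
      rw [MonoidHom.mem_ker, hb]
      rw [map_mul, map_mul, map_mul, map_inv]
      have h1 : theta K X (Coprod.inl (k₁ ^ N)) = ((k₁ : G)) ^ N := by
        simp [theta, Coprod.lift_apply_inl]
      have h2 : theta K X (Coprod.inl ((k₂ ^ N)⁻¹)) = ((k₂ : G) ^ N)⁻¹ := by
        simp [theta, Coprod.lift_apply_inl]
      rw [h1, h2, ha, hconj]
      group
    have hη : eta K X b = p * k₁ ^ N * p⁻¹ * (k₂ ^ N)⁻¹ := by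
      rw [hb, map_mul, map_mul, map_mul, map_inv]
      have h1 : eta K X (Coprod.inl (k₁ ^ N)) = k₁ ^ N := by
        simp [eta, Coprod.lift_apply_inl]
      have h2 : eta K X (Coprod.inl ((k₂ ^ N)⁻¹)) = (k₂ ^ N)⁻¹ := by
        simp [eta, Coprod.lift_apply_inl]
      rw [h1, h2, hp]
    have hC : |φ (eta K X b)| ≤ l m := hl m b hker hlen
    rw [hη] at hC
    have e1 := hD p (k₁ ^ N)
    have e2 := hD (p * k₁ ^ N) p⁻¹
    have e3 := hD (p * k₁ ^ N * p⁻¹) ((k₂ ^ N)⁻¹)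
    have e4 := QMExt.qm_pow hD k₁ n
    have e5 := QMExt.qm_pow hD k₂ n
    have e6 := hD (k₂ ^ N) ((k₂ ^ N)⁻¹)
    rw [mul_inv_cancel] at e6
    have e7 := hD (1 : ↥K) 1
    rw [mul_one] at e7
    rw [hN] at e1 e2 e3 e6 hC
    rw [abs_le] at hC e1 e2 e3 e4 e5 e6 e7
    rw [hE, hDdef]
    push_cast
    nlinarith [hC.1, hC.2, e1.1, e1.2, e2.1, e2.2, e3.1, e3.2, e4.1, e4.2,
      e5.1, e5.2, e6.1, e6.2, e7.1, e7.2]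
  have := QMExt.forall_mul_le key
  linarith

end AuxHelpers

/-- A `(G,X)`-controlled quasimorphism on `K` is `G`-quasi-invariant with
`D^G(φ) ≤ 2 D(φ)`. -/
theorem controlled_implies_quasi_invariant {G : Type*} [Group G]
    (K : Subgroup G) (X : Set G)
    (hXsym : ∀ x ∈ X, x⁻¹ ∈ X) (hgen : Function.Surjective (theta K X))
    (φ : ↥K → ℝ) (hqm : IsQM φ) (hctrl : Controlled K X φ) :
    IsGQuasiInvariant K φ ∧
      (∀ k₁ k₂ : ↥K, IsConj (k₁ : G) (k₂ : G) → |φ k₁ - φ k₂| ≤ 2 * qmDefect φ) ∧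
      invDefect K φ ≤ 2 * qmDefect φ := by
  have hle : ∀ k₁ k₂ : ↥K, IsConj (k₁ : G) (k₂ : G) → |φ k₁ - φ k₂| ≤ 2 * qmDefect φ := by
    intro k₁ k₂ h
    rw [abs_sub_le_iff]
    exact ⟨QMExt.one_sided K X hgen φ hqm hctrl k₁ k₂ h,
      QMExt.one_sided K X hgen φ hqm hctrl k₂ k₁ h.symm⟩
  have hD0 : 0 ≤ qmDefect φ := by
    have := QMExt.qmDefect_spec φ hqm 1 1
    have h1 : (0 : ℝ) ≤ |φ 1 + φ 1 - φ (1 * 1)| := abs_nonneg _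
    linarith
  refine ⟨⟨2 * qmDefect φ, hle⟩, hle, ?_⟩
  apply Real.sSup_le
  · rintro r ⟨k₁, k₂, hc, rfl⟩
    exact hle k₁ k₂ hc
  · linarith
end
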